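/- arXiv:1701.04870 — 8 statements merged into one kernel-verified Lean document; each statement's English description precedes it below -/
import Mathlib

section
/- (Comparison Principle 1, Proposition 1.) Assume A satisfies the MBP. Fix n, a convention m̄, a state x ∈ Δ^{(n)}, and indices i ≠ m̄, k ∉ {i, m̄}, l ∉ {i, m̄}, with x(m̄) ≥ 1/n and x(i) ≥ 1/n. Consider the two two-step paths γ₁ : x → x^{m̄,k} → x^{(m̄,k)(i,l)} and γ₂ : x → x^{i,k} → x^{(i,k)(m̄,l)}, and suppose x, x^{m̄,k}, x^{i,k} ∈ D^{(n)}(e_{m̄}). Then I^{(n)}(γ₂) − I^{(n)}(γ₁) = (1/n)(A_{m̄m̄} − A_{lm̄} − A_{m̄i} + A_{li}), which is strictly positive; in particular I^{(n)}(γ₁) ≤ I^{(n)}(γ₂). -/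
open Finset Filter

noncomputable section

/-- Expected payoff of strategy `i` at state `x`: `π(i,x) = ∑ j, A i j * x j`. -/
def pay {s : ℕ} (A : Fin s → Fin s → ℝ) (i : Fin s) (x : Fin s → ℝ) : ℝ :=
  ∑ j, A i j * x j

/-- The `i`-th standard basis vector `e_i` of `ℝ^s`. -/
def vertex {s : ℕ} (i : Fin s) : Fin s → ℝ := fun j => if j = i then 1 else 0

/-- The discrete simplex `Δ^{(n)}`. -/
def simplexD (s n : ℕ) : Set (Fin s → ℝ) :=
  {x | (∀ i, 0 ≤ x i) ∧ (∑ i, x i) = 1 ∧ ∀ i, ∃ k : ℤ, x i = (k : ℝ) / n}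

/-- The basin of attraction `D^{(n)}(e_m)` of the convention `m`. -/
def basin {s : ℕ} (A : Fin s → Fin s → ℝ) (n : ℕ) (m : Fin s) : Set (Fin s → ℝ) :=
  {x | x ∈ simplexD s n ∧ ∀ k, pay A m x ≥ pay A k x}

/-- The state `x^{i,j}` obtained from `x` when one agent switches from `i` to `j`. -/
def step {s : ℕ} (n : ℕ) (x : Fin s → ℝ) (i j : Fin s) : Fin s → ℝ :=
  fun h => x h + (1 / (n : ℝ)) * (vertex j h - vertex i h)

/-- Logit cost of a single transition whose target strategy is `j`:
`c^{(n)}(x, x^{i,j}) = max_l π(l,x) − π(j,x)`. -/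
def logitCost {s : ℕ} (A : Fin s → Fin s → ℝ) (x : Fin s → ℝ) (j : Fin s) : ℝ :=
  (⨆ l, pay A l x) - pay A j x

/-- The marginal bandwagon property. -/
def MBP {s : ℕ} (A : Fin s → Fin s → ℝ) : Prop :=
  ∀ i j k : Fin s, i ≠ j → j ≠ k → i ≠ k → A i i - A j i > A i k - A j k


lemma payStep {s : ℕ} (A : Fin s → Fin s → ℝ) (n : ℕ) (x : Fin s → ℝ) (a b j : Fin s) :
    pay A j (step n x a b) = pay A j x + (1 / (n : ℝ)) * (A j b - A j a) := by
  unfold pay step vertex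
  have h : ∀ h : Fin s, A j h * (x h + (1 / (n : ℝ)) *
      ((if h = b then (1:ℝ) else 0) - (if h = a then (1:ℝ) else 0)))
      = A j h * x h + (1 / (n : ℝ)) * (A j h * (if h = b then (1:ℝ) else 0))
        - (1 / (n : ℝ)) * (A j h * (if h = a then (1:ℝ) else 0)) := by
    intro h; ring
  simp_rw [h, Finset.sum_sub_distrib, Finset.sum_add_distrib, ← Finset.mul_sum,
    mul_ite, mul_one, mul_zero, Finset.sum_ite_eq', Finset.mem_univ, if_pos]
  ring

lemma supPay_eq {s : ℕ} [Nonempty (Fin s)] (A : Fin s → Fin s → ℝ) (x : Fin s → ℝ) (m : Fin s)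
    (h : ∀ j, pay A m x ≥ pay A j x) : (⨆ j, pay A j x) = pay A m x :=
  le_antisymm (ciSup_le h) (le_ciSup (f := fun j => pay A j x) (Set.Finite.bddAbove (Set.finite_range _)) m)

/-- **Comparison Principle 1 (Proposition 1).** -/
theorem comparison_principle_one
    (s n : ℕ) (hs : 2 ≤ s) (hn : 0 < n)
    (A : Fin s → Fin s → ℝ) (hMBP : MBP A)
    (m i k l : Fin s)
    (him : i ≠ m) (hki : k ≠ i) (hkm : k ≠ m) (hli : l ≠ i) (hlm : l ≠ m)
    (x : Fin s → ℝ) (hx : x ∈ simplexD s n)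
    (hxm : x m ≥ 1 / (n : ℝ)) (hxi : x i ≥ 1 / (n : ℝ))
    (hxD : x ∈ basin A n m)
    (h1D : step n x m k ∈ basin A n m)
    (h2D : step n x i k ∈ basin A n m) :
    (logitCost A x k + logitCost A (step n x i k) l)
        - (logitCost A x k + logitCost A (step n x m k) l)
      = (1 / (n : ℝ)) * (A m m - A l m - A m i + A l i) ∧
    0 < (1 / (n : ℝ)) * (A m m - A l m - A m i + A l i) ∧
    logitCost A x k + logitCost A (step n x m k) l
      ≤ logitCost A x k + logitCost A (step n x i k) l := by
  haveI : Nonempty (Fin s) := Fin.pos_iff_nonempty.mp (by omega)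
  have hpos : 0 < (1 / (n : ℝ)) * (A m m - A l m - A m i + A l i) := by
    have hmbp := hMBP m l i hlm.symm hli him.symm
    have hn' : (0:ℝ) < 1 / (n : ℝ) := by positivity
    nlinarith
  have e2 : logitCost A (step n x i k) l
      = pay A m (step n x i k) - pay A l (step n x i k) := by
    unfold logitCost; rw [supPay_eq A _ m h2D.2]
  have e1 : logitCost A (step n x m k) l
      = pay A m (step n x m k) - pay A l (step n x m k) := by
    unfold logitCost; rw [supPay_eq A _ m h1D.2]
  have heq : (logitCost A x k + logitCost A (step n x i k) l)
        - (logitCost A x k + logitCost A (step n x m k) l)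
      = (1 / (n : ℝ)) * (A m m - A l m - A m i + A l i) := by
    rw [e1, e2, payStep, payStep, payStep, payStep]; ring
  exact ⟨heq, hpos, by linarith⟩
end
end

section
/- (Relative strength of positive feedback effects.) Fix n, a convention m̄, a state x ∈ Δ^{(n)} with x(m̄) ≥ 2/n, and distinct strategies i, j, both ≠ m̄. Consider the two-step paths γ₁ : x → x^{m̄,i} → x^{(m̄,i)(m̄,j)} and γ₂ : x → x^{m̄,j} → x^{(m̄,j)(m̄,i)}, and suppose x, x^{m̄,i}, x^{m̄,j} ∈ D^{(n)}(e_{m̄}). Then I^{(n)}(γ₂) − I^{(n)}(γ₁) = (1/n)(A_{ji} − A_{jm̄} + A_{m̄j} − A_{m̄i} − A_{ij} + A_{im̄}). In particular, the difference depends only on the strategies m̄, i, j and not on the state x. -/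
open Finset Filter

noncomputable section

lemma sup_eq_pay_m {s : ℕ} (hs : 0 < s) (A : Fin s → Fin s → ℝ) (m : Fin s)
    (x : Fin s → ℝ) (h : ∀ k, pay A m x ≥ pay A k x) :
    (⨆ l, pay A l x) = pay A m x := by
  haveI : Nonempty (Fin s) := ⟨⟨0, hs⟩⟩
  refine le_antisymm (ciSup_le h)
    (le_ciSup (f := fun l => pay A l x) (Set.Finite.bddAbove (Set.finite_range _)) m)

lemma pay_step {s : ℕ} (A : Fin s → Fin s → ℝ) (n : ℕ) (x : Fin s → ℝ) (k i j : Fin s) :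
    pay A k (step n x i j) = pay A k x + (1 / (n : ℝ)) * (A k j - A k i) := by
  have key : ∀ h : Fin s, A k h * (x h + 1 / (n:ℝ) * (vertex j h - vertex i h))
      = A k h * x h + 1 / (n:ℝ) * ((if h = j then A k h else 0) - if h = i then A k h else 0) := by
    intro h; simp only [vertex]; split_ifs <;> ring
  simp only [pay, step]
  rw [Finset.sum_congr rfl (fun h _ => key h), Finset.sum_add_distrib, ← Finset.mul_sum,
    Finset.sum_sub_distrib]
  simp

/-- **Relative strength of the positive feedback effects (Proposition 2).** -/
theorem relative_strength_positive_feedback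
    (s n : ℕ) (hs : 2 ≤ s) (hn : 0 < n)
    (A : Fin s → Fin s → ℝ)
    (m i j : Fin s) (hij : i ≠ j) (him : i ≠ m) (hjm : j ≠ m)
    (x : Fin s → ℝ) (hx : x ∈ simplexD s n)
    (hxm : x m ≥ 2 / (n : ℝ))
    (hxD : x ∈ basin A n m)
    (h1D : step n x m i ∈ basin A n m)
    (h2D : step n x m j ∈ basin A n m) :
    (logitCost A x j + logitCost A (step n x m j) i)
        - (logitCost A x i + logitCost A (step n x m i) j)
      = (1 / (n : ℝ)) * (A j i - A j m + A m j - A m i - A i j + A i m) := by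
  have hs0 : 0 < s := by omega
  have e0 := sup_eq_pay_m hs0 A m x hxD.2
  have e1 := sup_eq_pay_m hs0 A m _ h1D.2
  have e2 := sup_eq_pay_m hs0 A m _ h2D.2
  simp only [logitCost]
  rw [e0, e1, e2]
  simp only [pay_step]
  ring
end
end

section
/- (Block exchange identity, Lemma A.1(ii).) Fix n, a convention m̄, a strategy k ≠ m̄, and integers η, ρ ≥ 1. Let a, b ∈ Δ^{(n)} be states such that the paths of ρ consecutive m̄→k switches starting at a and at b, and the paths of η consecutive m̄→k switches starting at a^{k,m̄,η} (ending at a) and at b^{k,m̄,η} (ending at b), all lie in D^{(n)}(e_{m̄}). Then η[c^{(n)}(a, a^{m̄,k,ρ}) − c^{(n)}(b, b^{m̄,k,ρ})] + ρ[c^{(n)}(b^{k,m̄,η}, b) − c^{(n)}(a^{k,m̄,η}, a)] = 0. -/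
open Finset Filter

noncomputable section

/-- The state `x^{i,j,ρ}` reached by `ρ` consecutive switches from `i` to `j`. -/
def stepk {s : ℕ} (n : ℕ) (x : Fin s → ℝ) (i j : Fin s) (ρ : ℕ) : Fin s → ℝ :=
  fun h => x h + ((ρ : ℝ) / (n : ℝ)) * (vertex j h - vertex i h)

/-- Total cost `c^{(n)}(x, x^{i,j,ρ})` of the path of `ρ` consecutive switches from `i` to `j`. -/
def blockCost {s : ℕ} (A : Fin s → Fin s → ℝ) (n : ℕ) (x : Fin s → ℝ) (i j : Fin s)
    (ρ : ℕ) : ℝ :=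
  ∑ ι ∈ Finset.range ρ, logitCost A (stepk n x i j ι) j

lemma pay_stepk {s : ℕ} (A : Fin s → Fin s → ℝ) (n : ℕ) (x : Fin s → ℝ)
    (i i' j : Fin s) (ι : ℕ) :
    pay A j (stepk n x i i' ι) = pay A j x + ((ι : ℝ) / n) * (A j i' - A j i) := by
  simp only [pay, stepk, vertex, mul_add, Finset.sum_add_distrib, mul_sub, mul_ite,
    mul_one, mul_zero, Finset.sum_sub_distrib, Finset.sum_ite_eq', Finset.mem_univ,
    if_true]
  ring

lemma logitCost_basin {s : ℕ} (A : Fin s → Fin s → ℝ) (n : ℕ) (m j : Fin s)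
    (x : Fin s → ℝ) (hx : x ∈ basin A n m) :
    logitCost A x j = pay A m x - pay A j x := by
  have : (⨆ l, pay A l x) = pay A m x := by
    haveI : Nonempty (Fin s) := ⟨m⟩
    exact le_antisymm (ciSup_le fun l => hx.2 l)
      (le_ciSup (f := fun l => pay A l x) (Set.Finite.bddAbove (Set.finite_range _)) m)
  simp [logitCost, this]

lemma blockCost_basin {s : ℕ} (A : Fin s → Fin s → ℝ) (n : ℕ) (m k : Fin s)
    (x : Fin s → ℝ) (ρ : ℕ) (hx : ∀ ι ≤ ρ, stepk n x m k ι ∈ basin A n m) :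
    blockCost A n x m k ρ = (ρ : ℝ) * (pay A m x - pay A k x)
      + (∑ ι ∈ Finset.range ρ, (ι : ℝ)) * ((1 / n) * ((A m k - A m m) - (A k k - A k m))) := by
  unfold blockCost
  have h1 : ∀ ι ∈ Finset.range ρ, logitCost A (stepk n x m k ι) k
      = (pay A m x - pay A k x) + (ι : ℝ) * ((1 / n) * ((A m k - A m m) - (A k k - A k m))) := by
    intro ι hι
    rw [logitCost_basin A n m k _ (hx ι (le_of_lt (Finset.mem_range.mp hι))),
      pay_stepk, pay_stepk]
    ring
  rw [Finset.sum_congr rfl h1, Finset.sum_add_distrib, Finset.sum_const,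
    Finset.card_range, ← Finset.sum_mul]
  ring

/-- **Block exchange identity (Lemma A.1(ii)).** -/
theorem block_exchange_identity
    (s n : ℕ) (hs : 2 ≤ s) (hn : 0 < n)
    (A : Fin s → Fin s → ℝ)
    (m k : Fin s) (hkm : k ≠ m)
    (η ρ : ℕ) (hη : 1 ≤ η) (hρ : 1 ≤ ρ)
    (a b : Fin s → ℝ) (ha : a ∈ simplexD s n) (hb : b ∈ simplexD s n)
    (haρ : ∀ ι ≤ ρ, stepk n a m k ι ∈ basin A n m)
    (hbρ : ∀ ι ≤ ρ, stepk n b m k ι ∈ basin A n m)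
    (haη : ∀ ι ≤ η, stepk n (stepk n a k m η) m k ι ∈ basin A n m)
    (hbη : ∀ ι ≤ η, stepk n (stepk n b k m η) m k ι ∈ basin A n m) :
    (η : ℝ) * (blockCost A n a m k ρ - blockCost A n b m k ρ)
      + (ρ : ℝ) * (blockCost A n (stepk n b k m η) m k η
                    - blockCost A n (stepk n a k m η) m k η) = 0 := by
  rw [blockCost_basin A n m k a ρ haρ, blockCost_basin A n m k b ρ hbρ,
    blockCost_basin A n m k _ η haη, blockCost_basin A n m k _ η hbη,
    pay_stepk, pay_stepk, pay_stepk, pay_stepk]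
  ring
end
end

section
/- (Single binding constraint at the optimum, Proposition A.2.) Assume Condition A. Then for every convention m̄ there exists t* with ζ(t*) ∈ 𝒦_{m̄} achieving ω(t*) = min{ω(t) : ζ(t) ∈ 𝒦_{m̄}} such that the endpoint q(t*) has exactly one binding constraint: there is exactly one strategy j ≠ m̄ with π(m̄, q(t*)) = π(j, q(t*)), and π(m̄, q(t*)) > π(l, q(t*)) for every other strategy l ≠ m̄, j. -/
open Finset Filter

noncomputable section

/-- A mixed strategy Nash equilibrium of the symmetric game `A` with support
exactly `T`. -/
def mixedNashSupp {s : ℕ} (A : Fin s → Fin s → ℝ) (T : Finset (Fin s))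
    (p : Fin s → ℝ) : Prop :=
  (∀ i, 0 ≤ p i) ∧ (∑ i, p i) = 1 ∧ (∀ i, p i ≠ 0 ↔ i ∈ T) ∧
  (∀ i ∈ T, ∀ k, pay A i p ≥ pay A k p)

/-- Condition A: coordination game, marginal bandwagon property, and existence of
mixed Nash equilibria with every nonempty support. -/
def CondA {s : ℕ} (A : Fin s → Fin s → ℝ) : Prop :=
  (∀ i j : Fin s, j ≠ i → A i i > A j i) ∧ MBP A ∧
  (∀ T : Finset (Fin s), T.Nonempty → ∃ p, mixedNashSupp A T p)

/-- The continuum simplex `Δ`. -/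
def simplexC (s : ℕ) : Set (Fin s → ℝ) :=
  {p | (∀ i, 0 ≤ p i) ∧ (∑ i, p i) = 1}

/-- The continuum basin of attraction `D̄(e_m)`. -/
def basinC {s : ℕ} (A : Fin s → Fin s → ℝ) (m : Fin s) : Set (Fin s → ℝ) :=
  {p | p ∈ simplexC s ∧ ∀ l, pay A m p ≥ pay A l p}

/-- The continuum cost `c̄(p,q)` of the straight-line segment from `p` to
`q = p + α (e_i − e_j)`. -/
def cbar {s : ℕ} (A : Fin s → Fin s → ℝ) (m i j : Fin s) (p q : Fin s → ℝ) : ℝ :=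
  (1 / 2) * (p j - q j) * (pay A m (p + q) - pay A i (p + q))

/-- The point `p^{(l)} = e_m + ∑_{h < l} t_h (e_{i_h} − e_m)` of a piecewise
straight-line path. -/
def Kpoint {s : ℕ} (m : Fin s) {K : ℕ} (tt : Fin K → ℝ) (ii : Fin K → Fin s)
    (l : ℕ) : Fin s → ℝ :=
  fun h => vertex m h + ∑ j : Fin K, if (j : ℕ) < l then tt j * (vertex (ii j) h - vertex m h) else 0

/-- The cost `ω(t)` of the piecewise straight-line path determined by
`t = ((t_1,…,t_K);(i_1,…,i_K))`. -/
def omegaCost {s : ℕ} (A : Fin s → Fin s → ℝ) (m : Fin s) {K : ℕ}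
    (tt : Fin K → ℝ) (ii : Fin K → Fin s) : ℝ :=
  ∑ l : Fin K, cbar A m (ii l) m (Kpoint m tt ii l) (Kpoint m tt ii (l + 1))

/-- The path `ζ(t)` determined by `t = ((t_1,…,t_K);(i_1,…,i_K))` belongs to the
set `𝒦_m` of admissible piecewise straight-line paths. -/
def admissibleK {s : ℕ} (A : Fin s → Fin s → ℝ) (m : Fin s) {K : ℕ}
    (tt : Fin K → ℝ) (ii : Fin K → Fin s) : Prop :=
  Function.Injective ii ∧ (∀ h, ii h ≠ m) ∧ (∀ h, tt h ∈ Set.Icc (0 : ℝ) 1) ∧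
  (∀ l ≤ K, Kpoint m tt ii l ∈ basinC A m) ∧
  (∃ j, j ≠ m ∧ pay A m (Kpoint m tt ii K) = pay A j (Kpoint m tt ii K))

/-- The set of costs of admissible continuum escape paths from convention `m`. -/
def omegaSet {s : ℕ} (A : Fin s → Fin s → ℝ) (m : Fin s) : Set ℝ :=
  {r | ∃ (K : ℕ) (tt : Fin K → ℝ) (ii : Fin K → Fin s),
    admissibleK A m tt ii ∧ r = omegaCost A m tt ii}

namespace SBC

variable {s : ℕ}

/-- direction vector `e_i − e_m` -/
def dvec (m i : Fin s) : Fin s → ℝ := fun h => vertex i h - vertex m h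

/-- payoff gap `π(m,x) − π(k,x)` -/
def gap (A : Fin s → Fin s → ℝ) (m k : Fin s) (x : Fin s → ℝ) : ℝ :=
  pay A m x - pay A k x

/-- directional derivative of `gap k` along `dvec m i` -/
def gam (A : Fin s → Fin s → ℝ) (m k i : Fin s) : ℝ := gap A m k (dvec m i)

lemma pay_vertex (A : Fin s → Fin s → ℝ) (k i : Fin s) : pay A k (vertex i) = A k i := by
  simp [pay, vertex, mul_ite, mul_one, mul_zero]

lemma pay_add (A : Fin s → Fin s → ℝ) (k : Fin s) (p q : Fin s → ℝ) :
    pay A k (p + q) = pay A k p + pay A k q := by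
  simp [pay, Pi.add_apply, mul_add, Finset.sum_add_distrib]

lemma pay_shift (A : Fin s → Fin s → ℝ) (m k i : Fin s) (x : Fin s → ℝ) (T : ℝ) :
    pay A k (fun h => x h + T * dvec m i h) = pay A k x + T * (A k i - A k m) := by
  have h1 : ∑ j, A k j * dvec m i j = A k i - A k m := by
    simp [dvec, vertex, mul_ite, mul_one, mul_zero, mul_sub, Finset.sum_sub_distrib]
  calc pay A k (fun h => x h + T * dvec m i h)
      = ∑ j, (A k j * x j + T * (A k j * dvec m i j)) := by
        unfold pay; apply Finset.sum_congr rfl; intro j _; ring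
    _ = pay A k x + T * ∑ j, A k j * dvec m i j := by
        rw [Finset.sum_add_distrib, ← Finset.mul_sum]; rfl
    _ = pay A k x + T * (A k i - A k m) := by rw [h1]

lemma gam_eq (A : Fin s → Fin s → ℝ) (m k i : Fin s) :
    gam A m k i = (A m i - A m m) - (A k i - A k m) := by
  unfold gam gap
  have h1 : dvec m i = (fun h => (0:ℝ) + 1 * dvec m i h) := by funext h; ring
  rw [h1, pay_shift A m m i (fun _ => (0:ℝ)) 1, pay_shift A m k i (fun _ => (0:ℝ)) 1]
  have h0 : pay A m (fun _ => (0:ℝ)) = 0 := by simp [pay]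
  have h0' : pay A k (fun _ => (0:ℝ)) = 0 := by simp [pay]
  rw [h0, h0']; ring

lemma gap_shift (A : Fin s → Fin s → ℝ) (m k i : Fin s) (x : Fin s → ℝ) (T : ℝ) :
    gap A m k (fun h => x h + T * dvec m i h) = gap A m k x + T * gam A m k i := by
  have hm := pay_shift A m m i x T
  have hk := pay_shift A m k i x T
  unfold gap
  rw [hm, hk, gam_eq]; ring

end SBC

namespace SBC

variable {s : ℕ}

lemma Kpoint_zero (m : Fin s) {K : ℕ} (tt : Fin K → ℝ) (ii : Fin K → Fin s) :
    Kpoint m tt ii 0 = vertex m := by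
  funext h
  simp [Kpoint]

lemma Kpoint_succ (m : Fin s) {K : ℕ} (tt : Fin K → ℝ) (ii : Fin K → Fin s) (l : Fin K) :
    Kpoint m tt ii ((l : ℕ) + 1)
      = fun h => Kpoint m tt ii (l : ℕ) h + tt l * dvec m (ii l) h := by
  funext h
  unfold Kpoint
  have key : ∀ j : Fin K,
      (if (j : ℕ) < (l : ℕ) + 1 then tt j * (vertex (ii j) h - vertex m h) else 0)
      = (if (j : ℕ) < (l : ℕ) then tt j * (vertex (ii j) h - vertex m h) else 0)
        + (if j = l then tt j * (vertex (ii j) h - vertex m h) else 0) := by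
    intro j
    rcases lt_trichotomy (j : ℕ) (l : ℕ) with hlt | heq | hgt
    · rw [if_pos (Nat.lt_succ_of_lt hlt), if_pos hlt, if_neg, add_zero]
      intro hje; rw [hje] at hlt; exact lt_irrefl _ hlt
    · have hje : j = l := Fin.ext heq
      rw [if_pos (by omega), if_neg (by omega), if_pos hje, zero_add]
    · rw [if_neg (by omega), if_neg (by omega), if_neg, add_zero]
      intro hje; rw [hje] at hgt; exact lt_irrefl _ hgt
  rw [Finset.sum_congr rfl (fun j _ => key j), Finset.sum_add_distrib,
    Finset.sum_ite_eq' Finset.univ l (fun j => tt j * (vertex (ii j) h - vertex m h)),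
    if_pos (Finset.mem_univ l)]
  unfold dvec
  ring

lemma cbar_seg (A : Fin s → Fin s → ℝ) (m i : Fin s) (hi : i ≠ m)
    (p : Fin s → ℝ) (T : ℝ) :
    cbar A m i m p (fun h => p h + T * dvec m i h)
      = 1 / 2 * T * (gap A m i p + gap A m i (fun h => p h + T * dvec m i h)) := by
  unfold cbar
  have hd : dvec m i m = -1 := by
    unfold dvec vertex
    rw [if_neg (Ne.symm hi), if_pos rfl]
    ring
  have hq : (fun h => p h + T * dvec m i h) m = p m - T := by
    show p m + T * dvec m i m = p m - T
    rw [hd]; ring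
  have hpay : ∀ k, pay A k (p + fun h => p h + T * dvec m i h)
      = pay A k p + pay A k (fun h => p h + T * dvec m i h) := by
    intro k; exact pay_add A k p _
  rw [hq, hpay, hpay]
  unfold gap
  ring

lemma gap_nonneg_of_basin (A : Fin s → Fin s → ℝ) (m : Fin s) {x : Fin s → ℝ}
    (hx : x ∈ basinC A m) (k : Fin s) : 0 ≤ gap A m k x := by
  have := hx.2 k
  unfold gap
  linarith [this]

end SBC

namespace SBC

open Finset

variable {s : ℕ}

/-- slope `a_l = G_l / t_l` of the own-payoff gap. -/
def aa (A : Fin s → Fin s → ℝ) (m : Fin s) (tl : Fin s → ℝ) (l : Fin s) : ℝ :=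
  gap A m l (vertex m) / tl l

/-- potential `φ_l(x) = gap_l(x)² / (2 a_l)`. -/
def phi (A : Fin s → Fin s → ℝ) (m : Fin s) (tl : Fin s → ℝ) (l : Fin s)
    (x : Fin s → ℝ) : ℝ :=
  (gap A m l x) ^ 2 / (2 * aa A m tl l)

/-- the value certificate `W(x) = min_{l ≠ m} φ_l(x)`. -/
def Wf (A : Fin s → Fin s → ℝ) (m : Fin s) (tl : Fin s → ℝ)
    (hne : (Finset.univ.erase m).Nonempty) (x : Fin s → ℝ) : ℝ :=
  (Finset.univ.erase m).inf' hne (fun l => phi A m tl l x)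

lemma seg_bound (A : Fin s → Fin s → ℝ) (m : Fin s) (tl : Fin s → ℝ)
    (hne : (Finset.univ.erase m).Nonempty)
    (Hpos : ∀ l, l ≠ m → 0 < tl l)
    (HG : ∀ l, l ≠ m → 0 < gap A m l (vertex m))
    (Hself : ∀ l, l ≠ m → gam A m l l = -(aa A m tl l))
    (Hcr1 : ∀ l h, l ≠ m → h ≠ m → l ≠ h → gam A m l h > gam A m l l)
    (Hcr2 : ∀ l h, l ≠ m → h ≠ m → l ≠ h → gam A m l h > gam A m h h)
    (x : Fin s → ℝ) (i : Fin s) (hi : i ≠ m) (T : ℝ) (hT : 0 ≤ T)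
    (hx : ∀ k, 0 ≤ gap A m k x)
    (hy : ∀ k, 0 ≤ gap A m k (fun h => x h + T * dvec m i h)) :
    Wf A m tl hne x
      ≤ Wf A m tl hne (fun h => x h + T * dvec m i h)
        + 1 / 2 * T * (gap A m i x + gap A m i (fun h => x h + T * dvec m i h)) := by
  have hmem_erase : ∀ k : Fin s, k ≠ m → k ∈ Finset.univ.erase m := fun k hk =>
    Finset.mem_erase.mpr ⟨hk, Finset.mem_univ k⟩
  set y : Fin s → ℝ := fun h => x h + T * dvec m i h with hy_def
  obtain ⟨ls, hlsmem, hWy⟩ := Finset.exists_mem_eq_inf' hne (fun l => phi A m tl l y)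
  have hlsne : ls ≠ m := (Finset.mem_erase.mp hlsmem).1
  have hWx : Wf A m tl hne x ≤ phi A m tl ls x := Finset.inf'_le _ hlsmem
  have hmin0 : phi A m tl ls y ≤ phi A m tl i y := by
    rw [← hWy]
    exact Finset.inf'_le _ (hmem_erase i hi)
  -- abbreviations (plain notation)
  have ha : 0 < aa A m tl ls := div_pos (HG ls hlsne) (Hpos ls hlsne)
  have hb : 0 < aa A m tl i := div_pos (HG i hi) (Hpos i hi)
  set a : ℝ := aa A m tl ls with ha_def
  set b : ℝ := aa A m tl i with hb_def
  set u : ℝ := gap A m ls y with hu_def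
  set v : ℝ := gap A m i y with hv_def
  set d : ℝ := -(gam A m ls i) with hd_def
  have hu0 : 0 ≤ u := hy ls
  have hv0 : 0 ≤ v := hy i
  -- endpoint relations
  have hgx_ls : gap A m ls x = u + T * d := by
    have h := gap_shift A m ls i x T
    rw [← hy_def] at h
    rw [hu_def, h, hd_def]; ring
  have hgx_i : gap A m i x = v + T * b := by
    have h := gap_shift A m i i x T
    rw [← hy_def] at h
    rw [hv_def, h, Hself i hi]; ring
  -- minimality inequality  b u² ≤ a v²
  have hbu : b * u ^ 2 ≤ a * v ^ 2 := by
    have h1 : u ^ 2 / (2 * a) ≤ v ^ 2 / (2 * b) := by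
      simp only [phi] at hmin0
      rw [← hu_def, ← hv_def] at hmin0
      exact hmin0
    rw [div_le_div_iff₀ (by linarith) (by linarith)] at h1
    nlinarith [h1]
  -- core inequality
  have hcore : d * (2 * u + T * d) ≤ a * (2 * v + T * b) := by
    rcases le_or_gt d 0 with hd0 | hd0
    · have h1 : 0 ≤ 2 * u + T * d := by
        have h2 : 0 ≤ gap A m ls x := hx ls
        rw [hgx_ls] at h2
        linarith
      have hL : d * (2 * u + T * d) ≤ 0 := mul_nonpos_of_nonpos_of_nonneg hd0 h1
      have hR : 0 ≤ a * (2 * v + T * b) := by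
        apply mul_nonneg ha.le
        have h2 : 0 ≤ gap A m i x := hx i
        rw [hgx_i] at h2
        linarith
      linarith
    · -- 0 < d : then d ≤ a, d ≤ b
      have hda : d ≤ a ∧ d ≤ b := by
        by_cases hlsi : ls = i
        · have hda' : d = a := by
            rw [hd_def, ← hlsi, Hself ls hlsne, neg_neg]
          have hdb' : d = b := by
            rw [hd_def, hlsi, Hself i hi, neg_neg]
          exact ⟨le_of_eq hda', le_of_eq hdb'⟩
        · have e1 := Hcr1 ls i hlsne hi hlsi
          have e2 := Hcr2 ls i hlsne hi hlsi
          rw [Hself ls hlsne] at e1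
          rw [Hself i hi] at e2
          constructor
          · rw [hd_def]; linarith
          · rw [hd_def]; linarith
      have hd2 : d ^ 2 ≤ a * b := by
        have e1 : d * d ≤ d * b := mul_le_mul_of_nonneg_left hda.2 hd0.le
        have e2 : d * b ≤ a * b := mul_le_mul_of_nonneg_right hda.1 hb.le
        nlinarith [e1, e2]
      have huv2 : b * u ^ 2 ≤ b * v ^ 2 → True := fun _ => trivial
      have hdu : d * u ≤ a * v := by
        have e1 : d ^ 2 * u ^ 2 ≤ (a * b) * u ^ 2 :=
          mul_le_mul_of_nonneg_right hd2 (sq_nonneg u)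
        have e2 : a * (b * u ^ 2) ≤ a * (a * v ^ 2) := mul_le_mul_of_nonneg_left hbu ha.le
        have hdu2 : (d * u) ^ 2 ≤ (a * v) ^ 2 := by nlinarith [e1, e2]
        by_contra hcon
        push_neg at hcon
        have hav : 0 ≤ a * v := mul_nonneg ha.le hv0
        have : (a * v) ^ 2 < (d * u) ^ 2 := by
          apply pow_lt_pow_left₀ hcon hav
          norm_num
        linarith
      have hTd2 : T * d ^ 2 ≤ T * (a * b) := mul_le_mul_of_nonneg_left hd2 hT
      nlinarith [hdu, hTd2]
  -- put it together
  have hphi : phi A m tl ls x ≤ phi A m tl ls y + 1 / 2 * T * (gap A m i x + v) := by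
    have e1 : phi A m tl ls x = (u + T * d) ^ 2 / (2 * a) := by
      simp only [phi]
      rw [hgx_ls]
    have e2 : phi A m tl ls y = u ^ 2 / (2 * a) := rfl
    rw [e1, e2, hgx_i]
    have hq : (u + T * d) ^ 2 / (2 * a) - u ^ 2 / (2 * a)
        = (T * (d * (2 * u + T * d))) / (2 * a) := by
      field_simp
      ring
    have h2a : (0:ℝ) < 2 * a := by linarith
    have hfin : (T * (d * (2 * u + T * d))) / (2 * a) ≤ 1 / 2 * T * ((v + T * b) + v) := by
      rw [div_le_iff₀ h2a]
      calc T * (d * (2 * u + T * d)) ≤ T * (a * (2 * v + T * b)) :=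
            mul_le_mul_of_nonneg_left hcore hT
        _ = 1 / 2 * T * ((v + T * b) + v) * (2 * a) := by ring
    linarith [hq, hfin]
  calc Wf A m tl hne x ≤ phi A m tl ls x := hWx
    _ ≤ phi A m tl ls y + 1 / 2 * T * (gap A m i x + v) := hphi
    _ = Wf A m tl hne y + 1 / 2 * T * (gap A m i x + gap A m i y) := by
        rw [Wf, hWy, hv_def]

end SBC

namespace SBC

open Finset

variable {s : ℕ}

lemma path_lb (A : Fin s → Fin s → ℝ) (m : Fin s) (tl : Fin s → ℝ)
    (hne : (Finset.univ.erase m).Nonempty)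
    (Hpos : ∀ l, l ≠ m → 0 < tl l)
    (HG : ∀ l, l ≠ m → 0 < gap A m l (vertex m))
    (Hself : ∀ l, l ≠ m → gam A m l l = -(aa A m tl l))
    (Hcr1 : ∀ l h, l ≠ m → h ≠ m → l ≠ h → gam A m l h > gam A m l l)
    (Hcr2 : ∀ l h, l ≠ m → h ≠ m → l ≠ h → gam A m l h > gam A m h h)
    {K : ℕ} (tt : Fin K → ℝ) (ii : Fin K → Fin s)
    (hadm : admissibleK A m tt ii) :
    Wf A m tl hne (vertex m)
      ≤ Wf A m tl hne (Kpoint m tt ii K) + omegaCost A m tt ii := by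
  obtain ⟨hinj, him, hIcc, hbasin, hbd⟩ := hadm
  set F : ℕ → ℝ := fun n =>
    if h : n < K then
      cbar A m (ii ⟨n, h⟩) m (Kpoint m tt ii n) (Kpoint m tt ii (n + 1)) else 0
    with hF_def
  have main : ∀ n, n ≤ K →
      Wf A m tl hne (vertex m) ≤ Wf A m tl hne (Kpoint m tt ii n) + ∑ l ∈ range n, F l := by
    intro n
    induction n with
    | zero =>
      intro _
      rw [Kpoint_zero]
      simp
    | succ n ihn =>
      intro hn
      have hnK : n < K := Nat.lt_of_succ_le hn
      have h1 := ihn (le_of_lt hnK)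
      set l : Fin K := ⟨n, hnK⟩ with hl_def
      have hyeq : Kpoint m tt ii (n + 1)
          = fun h => Kpoint m tt ii n h + tt l * dvec m (ii l) h := by
        have := Kpoint_succ m tt ii l
        exact this
      have hgx : ∀ k, 0 ≤ gap A m k (Kpoint m tt ii n) :=
        gap_nonneg_of_basin A m (hbasin n (le_of_lt hnK))
      have hgy : ∀ k, 0 ≤ gap A m k (Kpoint m tt ii (n + 1)) :=
        gap_nonneg_of_basin A m (hbasin (n + 1) hn)
      have hgy' : ∀ k, 0 ≤ gap A m k
          (fun h => Kpoint m tt ii n h + tt l * dvec m (ii l) h) := by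
        rw [← hyeq]; exact hgy
      have seg := seg_bound A m tl hne Hpos HG Hself Hcr1 Hcr2
        (Kpoint m tt ii n) (ii l) (him l) (tt l) (hIcc l).1 hgx hgy'
      have hFn : F n = 1 / 2 * tt l * (gap A m (ii l) (Kpoint m tt ii n)
          + gap A m (ii l) (fun h => Kpoint m tt ii n h + tt l * dvec m (ii l) h)) := by
        rw [hF_def]
        simp only [dif_pos hnK]
        rw [← hl_def, hyeq]
        exact cbar_seg A m (ii l) (him l) (Kpoint m tt ii n) (tt l)
      rw [Finset.sum_range_succ]
      have seg' : Wf A m tl hne (Kpoint m tt ii n)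
          ≤ Wf A m tl hne (Kpoint m tt ii (n + 1)) + F n := by
        rw [hFn, hyeq]
        exact seg
      linarith
  have hsum : omegaCost A m tt ii = ∑ l ∈ range K, F l := by
    rw [omegaCost, ← Fin.sum_univ_eq_sum_range F K]
    apply Finset.sum_congr rfl
    intro l _
    rw [hF_def]
    simp only [dif_pos l.isLt, Fin.eta]
  rw [hsum]
  exact main K le_rfl

lemma omega_lb (A : Fin s → Fin s → ℝ) (m : Fin s) (tl : Fin s → ℝ)
    (hne : (Finset.univ.erase m).Nonempty)
    (Hpos : ∀ l, l ≠ m → 0 < tl l)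
    (HG : ∀ l, l ≠ m → 0 < gap A m l (vertex m))
    (Hself : ∀ l, l ≠ m → gam A m l l = -(aa A m tl l))
    (Hcr1 : ∀ l h, l ≠ m → h ≠ m → l ≠ h → gam A m l h > gam A m l l)
    (Hcr2 : ∀ l h, l ≠ m → h ≠ m → l ≠ h → gam A m l h > gam A m h h) :
    ∀ r ∈ omegaSet A m, Wf A m tl hne (vertex m) ≤ r := by
  rintro r ⟨K, tt, ii, hadm, rfl⟩
  have h1 := path_lb A m tl hne Hpos HG Hself Hcr1 Hcr2 tt ii hadm
  obtain ⟨j, hj, hje⟩ := hadm.2.2.2.2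
  have hWq : Wf A m tl hne (Kpoint m tt ii K) ≤ 0 := by
    have hphi0 : phi A m tl j (Kpoint m tt ii K) = 0 := by
      unfold phi gap
      rw [hje]
      simp
    calc Wf A m tl hne (Kpoint m tt ii K)
        ≤ phi A m tl j (Kpoint m tt ii K) :=
          Finset.inf'_le _ (Finset.mem_erase.mpr ⟨hj, Finset.mem_univ j⟩)
      _ = 0 := hphi0
  linarith

end SBC

namespace SBC

open Finset

variable {s : ℕ}

lemma cross1 (A : Fin s → Fin s → ℝ) (hMBP : MBP A) (m l h : Fin s)
    (hl : l ≠ m) (hh : h ≠ m) (hlh : l ≠ h) : gam A m l h > gam A m l l := by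
  have hm := hMBP l m h hl (Ne.symm hh) hlh
  rw [gam_eq, gam_eq]
  linarith

lemma cross2 (A : Fin s → Fin s → ℝ) (hMBP : MBP A) (m l h : Fin s)
    (hl : l ≠ m) (hh : h ≠ m) (hlh : l ≠ h) : gam A m l h > gam A m h h := by
  have hm := hMBP h l m (Ne.symm hlh) hl hh
  rw [gam_eq, gam_eq]
  linarith

lemma gap_vertex (A : Fin s → Fin s → ℝ) (m k : Fin s) :
    gap A m k (vertex m) = A m m - A k m := by
  unfold gap
  rw [pay_vertex, pay_vertex]

lemma vertex_mem_basinC (A : Fin s → Fin s → ℝ) (m : Fin s)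
    (hco : ∀ i j : Fin s, j ≠ i → A i i > A j i) : vertex m ∈ basinC A m := by
  refine ⟨⟨fun i => ?_, ?_⟩, fun k => ?_⟩
  · unfold vertex; positivity
  · simp [vertex]
  · rw [pay_vertex, pay_vertex]
    by_cases hk : k = m
    · rw [hk]
    · exact le_of_lt (hco m k hk)

/-- facts about the pairwise `{m,l}` equilibrium -/
lemma pair_facts (A : Fin s → Fin s → ℝ) (m l : Fin s) (hl : l ≠ m)
    {p : Fin s → ℝ} (hp : mixedNashSupp A ({m, l} : Finset (Fin s)) p) :
    p = (fun h => vertex m h + p l * dvec m l h) ∧ 0 < p l ∧ p l ≤ 1 ∧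
      gap A m l p = 0 ∧ (∀ k, 0 ≤ gap A m k p) ∧ p ∈ basinC A m := by
  obtain ⟨hnn, hsum, hsupp, hNE⟩ := hp
  have hml : m ≠ l := Ne.symm hl
  have hmem_m : m ∈ ({m, l} : Finset (Fin s)) := Finset.mem_insert_self m {l}
  have hmem_l : l ∈ ({m, l} : Finset (Fin s)) :=
    Finset.mem_insert_of_mem (Finset.mem_singleton_self l)
  have hzero : ∀ k, k ≠ m → k ≠ l → p k = 0 := by
    intro k hkm hkl
    by_contra hc
    have := (hsupp k).1 hc
    rw [Finset.mem_insert, Finset.mem_singleton] at this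
    tauto
  have hsum2 : p m + p l = 1 := by
    rw [← hsum]
    rw [show (∑ k, p k) = ∑ k ∈ ({m, l} : Finset (Fin s)), p k from
      (Finset.sum_subset (Finset.subset_univ _) (by
        intro k _ hk
        rw [Finset.mem_insert, Finset.mem_singleton] at hk
        push_neg at hk
        exact hzero k hk.1 hk.2)).symm]
    rw [Finset.sum_pair hml]
  have hpl : 0 < p l := lt_of_le_of_ne (hnn l) (Ne.symm ((hsupp l).2 hmem_l))
  have hpl1 : p l ≤ 1 := by have := hnn m; linarith
  have hshape : p = (fun h => vertex m h + p l * dvec m l h) := by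
    funext h
    show p h = vertex m h + p l * dvec m l h
    unfold vertex dvec vertex
    by_cases h1 : h = m
    · subst h1
      rw [if_pos rfl, if_neg hml]
      linarith
    · by_cases h2 : h = l
      · subst h2
        rw [if_neg h1, if_pos rfl]
        ring
      · rw [if_neg h1, if_neg h2, hzero h h1 h2]
        ring
  have hgapl : gap A m l p = 0 := by
    unfold gap
    have h1 := hNE m hmem_m l
    have h2 := hNE l hmem_l m
    linarith
  have hgaps : ∀ k, 0 ≤ gap A m k p := by
    intro k
    have := hNE m hmem_m k
    unfold gap
    linarith
  exact ⟨hshape, hpl, hpl1, hgapl, hgaps, ⟨⟨hnn, hsum⟩, fun k => by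
    have := hgaps k; unfold gap at this; linarith⟩⟩

/-- a `{m, ls, l}` equilibrium is impossible when `ls` and `l` both bind at the
pairwise `{m,ls}` equilibrium. -/
lemma triple_contra (A : Fin s → Fin s → ℝ) (m ls l : Fin s)
    (hls : ls ≠ m) (hl : l ≠ m) (hnel : l ≠ ls) (hMBP : MBP A)
    (t : ℝ) (ht : 0 < t)
    (hEls : gap A m ls (vertex m) + t * gam A m ls ls = 0)
    (hEl : gap A m l (vertex m) + t * gam A m l ls = 0)
    (hGls : 0 < gap A m ls (vertex m)) (hGl : 0 < gap A m l (vertex m))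
    {r : Fin s → ℝ} (hr : mixedNashSupp A ({m, ls, l} : Finset (Fin s)) r) : False := by
  obtain ⟨hnn, hsum, hsupp, hNE⟩ := hr
  have hmls : m ≠ ls := Ne.symm hls
  have hmll : m ≠ l := Ne.symm hl
  have hlsl : ls ≠ l := Ne.symm hnel
  have hmem_m : m ∈ ({m, ls, l} : Finset (Fin s)) := by simp
  have hmem_ls : ls ∈ ({m, ls, l} : Finset (Fin s)) := by simp
  have hmem_l : l ∈ ({m, ls, l} : Finset (Fin s)) := by simp
  have hzero : ∀ k, k ≠ m → k ≠ ls → k ≠ l → r k = 0 := by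
    intro k h1 h2 h3
    by_contra hc
    have := (hsupp k).1 hc
    simp only [Finset.mem_insert, Finset.mem_singleton] at this
    tauto
  set x : ℝ := r ls with hx_def
  set y : ℝ := r l with hy_def
  have hx : 0 < x := lt_of_le_of_ne (hnn ls) (Ne.symm ((hsupp ls).2 hmem_ls))
  have hy : 0 < y := lt_of_le_of_ne (hnn l) (Ne.symm ((hsupp l).2 hmem_l))
  have hsum3 : r m + x + y = 1 := by
    rw [← hsum]
    rw [show (∑ k, r k) = ∑ k ∈ ({m, ls, l} : Finset (Fin s)), r k from
      (Finset.sum_subset (Finset.subset_univ _) (by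
        intro k _ hk
        simp only [Finset.mem_insert, Finset.mem_singleton] at hk
        push_neg at hk
        exact hzero k hk.1 hk.2.1 hk.2.2)).symm]
    rw [Finset.sum_insert (by simp [hmls, hmll]), Finset.sum_pair hlsl]
    ring
  have hshape : r = (fun h => (fun h' => vertex m h' + x * dvec m ls h') h + y * dvec m l h) := by
    funext h
    show r h = (vertex m h + x * dvec m ls h) + y * dvec m l h
    unfold vertex dvec vertex
    by_cases h1 : h = m
    · subst h1
      rw [if_pos rfl, if_neg hmls, if_neg hmll]
      linarith
    · by_cases h2 : h = ls
      · subst h2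
        rw [if_neg h1, if_pos rfl, if_neg hlsl]
        rw [hx_def]
        ring
      · by_cases h3 : h = l
        · subst h3
          rw [if_neg h1, if_neg h2, if_pos rfl]
          rw [hy_def]
          ring
        · rw [if_neg h1, if_neg h2, if_neg h3, hzero h h1 h2 h3]
          ring
  have hgap_r : ∀ k, gap A m k r = gap A m k (vertex m) + x * gam A m k ls + y * gam A m k l := by
    intro k
    rw [hshape]
    rw [gap_shift A m k l _ y, gap_shift A m k ls (vertex m) x]
    try ring
  have hgls_r : gap A m ls r = 0 := by
    unfold gap
    have h1 := hNE m hmem_m ls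
    have h2 := hNE ls hmem_ls m
    linarith
  have hgl_r : gap A m l r = 0 := by
    unfold gap
    have h1 := hNE m hmem_m l
    have h2 := hNE l hmem_l m
    linarith
  -- the algebra
  have eq1 : (x - t) * gam A m ls ls + y * gam A m ls l = 0 := by
    have := hgap_r ls
    rw [hgls_r] at this
    nlinarith [this, hEls]
  have eq2 : (x - t) * gam A m l ls + y * gam A m l l = 0 := by
    have := hgap_r l
    rw [hgl_r] at this
    nlinarith [this, hEl]
  have hglsls : gam A m ls ls < 0 := by nlinarith [hEls, hGls, ht]
  have hglls : gam A m l ls < 0 := by nlinarith [hEl, hGl, ht]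
  have hcrA : gam A m ls l > gam A m ls ls := cross1 A hMBP m ls l hls hl hlsl
  have hcrB : gam A m l ls > gam A m l l := cross1 A hMBP m l ls hl hls hnel
  have k1 : y * gam A m ls l > y * gam A m ls ls := by
    exact mul_lt_mul_of_pos_left hcrA hy
  have k2 : (t - x - y) * gam A m ls ls > 0 := by nlinarith [k1, eq1]
  have h_t_lt : t - x - y < 0 := by
    by_contra hcon
    push_neg at hcon
    nlinarith [mul_nonpos_of_nonneg_of_nonpos hcon hglsls.le]
  have k3 : y * gam A m l ls > y * gam A m l l := mul_lt_mul_of_pos_left hcrB hy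
  have k4 : (x + y - t) * gam A m l ls > 0 := by nlinarith [k3, eq2]
  have h_t_gt : x + y - t < 0 := by
    by_contra hcon
    push_neg at hcon
    nlinarith [mul_nonpos_of_nonneg_of_nonpos hcon hglls.le]
  linarith

end SBC

open SBC

/-- **Single binding constraint at the optimum (Proposition A.2).** -/
theorem single_binding_constraint
    (s : ℕ) (hs : 2 ≤ s)
    (A : Fin s → Fin s → ℝ) (hA : CondA A) (m : Fin s) :
    ∃ (K : ℕ) (tt : Fin K → ℝ) (ii : Fin K → Fin s),
      admissibleK A m tt ii ∧
      omegaCost A m tt ii = sInf (omegaSet A m) ∧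
      ∃ j, j ≠ m ∧ pay A m (Kpoint m tt ii K) = pay A j (Kpoint m tt ii K) ∧
        ∀ l, l ≠ m → l ≠ j →
          pay A m (Kpoint m tt ii K) > pay A l (Kpoint m tt ii K) := by
  classical
  obtain ⟨hco, hMBP, hNEx⟩ := hA
  have hcard : 1 < Fintype.card (Fin s) := by
    rw [Fintype.card_fin]
    omega
  obtain ⟨l0, hl0⟩ := Fintype.exists_ne_of_one_lt_card hcard m
  have hne : (Finset.univ.erase m).Nonempty :=
    ⟨l0, Finset.mem_erase.mpr ⟨hl0, Finset.mem_univ _⟩⟩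
  -- pairwise mixed equilibria
  have hex : ∀ l : Fin s, l ≠ m → ∃ p, mixedNashSupp A ({m, l} : Finset (Fin s)) p :=
    fun l _ => hNEx {m, l} ⟨m, by simp⟩
  choose! P hP using hex
  have hfacts := fun (l : Fin s) (hl : l ≠ m) => pair_facts A m l hl (hP l hl)
  have Hpos : ∀ l, l ≠ m → 0 < (fun l => P l l) l := fun l hl => (hfacts l hl).2.1
  have HG : ∀ l, l ≠ m → 0 < gap A m l (vertex m) := by
    intro l hl
    rw [gap_vertex]
    have := hco m l hl
    linarith
  have Hshift0 : ∀ l, l ≠ m →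
      gap A m l (vertex m) + P l l * gam A m l l = 0 := by
    intro l hl
    have h0 := (hfacts l hl).2.2.2.1
    rw [(hfacts l hl).1, gap_shift] at h0
    exact h0
  have Hself : ∀ l, l ≠ m → gam A m l l = -(aa A m (fun l => P l l) l) := by
    intro l hl
    have h0 := Hshift0 l hl
    have ht := Hpos l hl
    simp only at ht
    unfold aa
    simp only
    rw [neg_div', eq_div_iff (ne_of_gt ht)]
    linarith [h0]
  have Hcr1 : ∀ l h, l ≠ m → h ≠ m → l ≠ h → gam A m l h > gam A m l l :=
    fun l h hl hh hlh => cross1 A hMBP m l h hl hh hlh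
  have Hcr2 : ∀ l h, l ≠ m → h ≠ m → l ≠ h → gam A m l h > gam A m h h :=
    fun l h hl hh hlh => cross2 A hMBP m l h hl hh hlh
  -- choose the cheapest direction ls
  obtain ⟨ls, hlsmem, hWm⟩ :=
    Finset.exists_mem_eq_inf' hne (fun l => phi A m (fun l => P l l) l (vertex m))
  have hlsne : ls ≠ m := (Finset.mem_erase.mp hlsmem).1
  have hfls := hfacts ls hlsne
  have htpos : 0 < P ls ls := hfls.2.1
  have hGls : 0 < gap A m ls (vertex m) := HG ls hlsne
  -- the witness path data
  have hK1 : Kpoint m (fun _ : Fin 1 => P ls ls) (fun _ => ls) 1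
      = fun h => vertex m h + P ls ls * dvec m ls h := by
    have h := Kpoint_succ m (fun _ : Fin 1 => P ls ls) (fun _ => ls) (0 : Fin 1)
    have h0 : ((0 : Fin 1) : ℕ) = 0 := rfl
    rw [h0] at h
    rw [h, Kpoint_zero]
  have hK1' : Kpoint m (fun _ : Fin 1 => P ls ls) (fun _ => ls) 1 = P ls := by
    rw [hK1]
    exact hfls.1.symm
  have hgap_eq : gap A m ls (P ls) = 0 := hfls.2.2.2.1
  have hpay_eq : pay A m (P ls) = pay A ls (P ls) := by
    have h' : pay A m (P ls) - pay A ls (P ls) = 0 := hgap_eq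
    linarith
  -- admissibility of the witness
  have hadm : admissibleK A m (fun _ : Fin 1 => P ls ls) (fun _ => ls) := by
    refine ⟨fun a b _ => Subsingleton.elim a b, fun _ => hlsne,
      fun _ => ⟨htpos.le, hfls.2.2.1⟩, ?_, ⟨ls, hlsne, ?_⟩⟩
    · intro l hl
      interval_cases l
      · rw [Kpoint_zero]
        exact vertex_mem_basinC A m hco
      · rw [hK1']
        exact hfls.2.2.2.2.2
    · rw [hK1']
      exact hpay_eq
  -- cost of the witness path
  have hcost : omegaCost A m (fun _ : Fin 1 => P ls ls) (fun _ => ls)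
      = phi A m (fun l => P l l) ls (vertex m) := by
    unfold omegaCost
    rw [Fin.sum_univ_one]
    show cbar A m ls m (Kpoint m (fun _ : Fin 1 => P ls ls) (fun _ => ls) 0)
        (Kpoint m (fun _ : Fin 1 => P ls ls) (fun _ => ls) 1)
      = phi A m (fun l => P l l) ls (vertex m)
    rw [Kpoint_zero, hK1, cbar_seg A m ls hlsne (vertex m) (P ls ls)]
    rw [← hfls.1, hgap_eq]
    unfold phi aa
    simp only
    have h2 := ne_of_gt hGls
    have h3 := ne_of_gt htpos
    field_simp
    ring
  -- lower bound and sInf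
  have hlb := omega_lb A m (fun l => P l l) hne Hpos HG Hself Hcr1 Hcr2
  have hmem : omegaCost A m (fun _ : Fin 1 => P ls ls) (fun _ => ls) ∈ omegaSet A m :=
    ⟨1, fun _ => P ls ls, fun _ => ls, hadm, rfl⟩
  have hWval : Wf A m (fun l => P l l) hne (vertex m)
      = phi A m (fun l => P l l) ls (vertex m) := hWm
  have h1 : sInf (omegaSet A m) ≤ omegaCost A m (fun _ : Fin 1 => P ls ls) (fun _ => ls) :=
    csInf_le ⟨Wf A m (fun l => P l l) hne (vertex m), fun r hr => hlb r hr⟩ hmem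
  have h2 : Wf A m (fun l => P l l) hne (vertex m) ≤ sInf (omegaSet A m) :=
    le_csInf ⟨_, hmem⟩ hlb
  refine ⟨1, fun _ => P ls ls, fun _ => ls, hadm, ?_, ls, hlsne, ?_, ?_⟩
  · -- the witness cost equals the infimum
    have h3 : omegaCost A m (fun _ : Fin 1 => P ls ls) (fun _ => ls)
        = Wf A m (fun l => P l l) hne (vertex m) := hcost.trans hWval.symm
    linarith
  · rw [hK1']
    exact hpay_eq
  · intro l hlm hlls
    rw [hK1']
    have hge : 0 ≤ gap A m l (P ls) := hfls.2.2.2.2.1 l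
    rcases lt_or_eq_of_le hge with hgt | heq
    · have h4 : pay A m (P ls) - pay A l (P ls) > 0 := hgt
      linarith
    · exfalso
      have hEl : gap A m l (vertex m) + P ls ls * gam A m l ls = 0 := by
        have h0 : gap A m l (P ls) = 0 := heq.symm
        rw [hfls.1, gap_shift] at h0
        exact h0
      obtain ⟨r, hr⟩ := hNEx {m, ls, l} ⟨m, by simp⟩
      exact triple_contra A m ls l hlsne hlm hlls hMBP (P ls ls) htpos
        (Hshift0 ls hlsne) hEl hGls (HG l hlm) hr
end
end

section
/- (One kind of mistake at the optimum, Proposition A.3.) Assume Condition A. Then for every convention m̄ there exists a minimizer t* of ω over {t : ζ(t) ∈ 𝒦_{m̄}} with exactly one positive coordinate: there is an index k with t*_k > 0 and t*_l = 0 for all l ≠ k. In other words, the minimal-cost continuum escape path from convention m̄ is a single straight-line segment from e_{m̄} toward a single alternative strategy. -/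
open Finset Filter

noncomputable section

/-! ### Auxiliary development -/

/-- `a_j = π(m, e_m) − π(j, e_m)`. -/
def aaF {s : ℕ} (A : Fin s → Fin s → ℝ) (m j : Fin s) : ℝ := A m m - A j m

/-- `d_{j,i} = a_j − (π(m,e_i) − π(j,e_i))`. -/
def ddF {s : ℕ} (A : Fin s → Fin s → ℝ) (m j i : Fin s) : ℝ :=
  A m m - A j m - A m i + A j i

lemma sum_mul_vertex {s : ℕ} (A : Fin s → Fin s → ℝ) (i k : Fin s) :
    ∑ j, A i j * vertex k j = A i k := by
  simp [vertex, mul_ite, mul_one, mul_zero, Finset.sum_ite_eq']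

lemma pay_vertex {s : ℕ} (A : Fin s → Fin s → ℝ) (i k : Fin s) :
    pay A i (vertex k) = A i k := sum_mul_vertex A i k

lemma pay_kpoint {s : ℕ} (A : Fin s → Fin s → ℝ) (m : Fin s) {K : ℕ}
    (tt : Fin K → ℝ) (ii : Fin K → Fin s) (i : Fin s) (l : ℕ) :
    pay A i (Kpoint m tt ii l)
      = A i m + ∑ h : Fin K, (if (h : ℕ) < l then tt h * (A i (ii h) - A i m) else 0) := by
  unfold pay Kpoint
  simp only [mul_add, Finset.sum_add_distrib, Finset.mul_sum]
  congr 1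
  · exact sum_mul_vertex A i m
  · rw [Finset.sum_comm]
    refine Finset.sum_congr rfl fun h _ => ?_
    by_cases hc : (h : ℕ) < l
    · simp only [hc, if_true]
      have e : ∀ j, A i j * (tt h * (vertex (ii h) j - vertex m j))
          = tt h * (A i j * vertex (ii h) j) - tt h * (A i j * vertex m j) := by
        intro j; ring
      rw [Finset.sum_congr rfl fun j _ => e j, Finset.sum_sub_distrib,
        ← Finset.mul_sum, ← Finset.mul_sum, sum_mul_vertex, sum_mul_vertex]
      ring
    · simp [hc]

lemma sum_ite_succ {K : ℕ} (l : Fin K) (g : Fin K → ℝ) :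
    (∑ h : Fin K, if (h : ℕ) < (l : ℕ) + 1 then g h else 0)
      = (∑ h : Fin K, if (h : ℕ) < (l : ℕ) then g h else 0) + g l := by
  have key : ∀ h : Fin K, (if (h : ℕ) < (l : ℕ) + 1 then g h else 0)
      = (if (h : ℕ) < (l : ℕ) then g h else 0) + (if h = l then g h else 0) := by
    intro h
    rcases eq_or_ne h l with rfl | hne
    · simp
    · have hv : (h : ℕ) ≠ (l : ℕ) := fun e => hne (Fin.ext e)
      have hiff : ((h : ℕ) < (l : ℕ) + 1) ↔ ((h : ℕ) < (l : ℕ)) := by omega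
      simp [hiff, hne]
  rw [Finset.sum_congr rfl fun h _ => key h, Finset.sum_add_distrib]
  congr 1
  simp

lemma paydiff {s : ℕ} (A : Fin s → Fin s → ℝ) (m : Fin s) {K : ℕ}
    (tt : Fin K → ℝ) (ii : Fin K → Fin s) (i : Fin s) (l : ℕ) :
    pay A m (Kpoint m tt ii l) - pay A i (Kpoint m tt ii l)
      = aaF A m i - ∑ h : Fin K, (if (h : ℕ) < l then tt h * ddF A m i (ii h) else 0) := by
  rw [pay_kpoint, pay_kpoint]
  have e : ∀ h : Fin K,
      (if (h : ℕ) < l then tt h * (A m (ii h) - A m m) else 0)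
        - (if (h : ℕ) < l then tt h * (A i (ii h) - A i m) else 0)
      = -(if (h : ℕ) < l then tt h * ddF A m i (ii h) else 0) := by
    intro h; split_ifs with hc
    · unfold ddF; ring
    · simp
  have h2 : (∑ h : Fin K, if (h : ℕ) < l then tt h * (A m (ii h) - A m m) else 0)
      - (∑ h : Fin K, if (h : ℕ) < l then tt h * (A i (ii h) - A i m) else 0)
      = -∑ h : Fin K, (if (h : ℕ) < l then tt h * ddF A m i (ii h) else 0) := by
    rw [← Finset.sum_sub_distrib, Finset.sum_congr rfl fun h _ => e h, Finset.sum_neg_distrib]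
  unfold aaF
  linarith [h2]

lemma kpoint_m_coord {s : ℕ} (m : Fin s) {K : ℕ} (tt : Fin K → ℝ) (ii : Fin K → Fin s)
    (hii : ∀ h, ii h ≠ m) (l : ℕ) :
    Kpoint m tt ii l m = 1 - ∑ h : Fin K, (if (h : ℕ) < l then tt h else 0) := by
  unfold Kpoint
  have h1 : vertex m m = 1 := by simp [vertex]
  rw [h1]
  have e : ∀ h : Fin K, (if (h : ℕ) < l then tt h * (vertex (ii h) m - 1) else 0)
      = -(if (h : ℕ) < l then tt h else 0) := by
    intro h
    have h0 : vertex (ii h) m = 0 := by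
      unfold vertex; exact if_neg (Ne.symm (hii h))
    rw [h0]; split_ifs <;> ring
  rw [Finset.sum_congr rfl fun h _ => e h, Finset.sum_neg_distrib]
  ring

lemma pay_addv {s : ℕ} (A : Fin s → Fin s → ℝ) (i : Fin s) (x y : Fin s → ℝ) :
    pay A i (x + y) = pay A i x + pay A i y := by
  unfold pay
  rw [← Finset.sum_add_distrib]
  exact Finset.sum_congr rfl fun j _ => by simp [Pi.add_apply]; ring

lemma cost_term {s : ℕ} (A : Fin s → Fin s → ℝ) (m : Fin s) {K : ℕ}
    (tt : Fin K → ℝ) (ii : Fin K → Fin s) (hii : ∀ h, ii h ≠ m) (l : Fin K) :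
    cbar A m (ii l) m (Kpoint m tt ii l) (Kpoint m tt ii ((l : ℕ) + 1))
      = tt l * (aaF A m (ii l)
          - (∑ h : Fin K, if (h : ℕ) < (l : ℕ) then tt h * ddF A m (ii l) (ii h) else 0)
          - tt l * ddF A m (ii l) (ii l) / 2) := by
  unfold cbar
  have hpm : Kpoint m tt ii l m - Kpoint m tt ii ((l : ℕ) + 1) m = tt l := by
    rw [kpoint_m_coord m tt ii hii, kpoint_m_coord m tt ii hii, sum_ite_succ l tt]; ring
  rw [hpm, pay_addv, pay_addv]
  have d1 := paydiff A m tt ii (ii l) (l : ℕ)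
  have d2 := paydiff A m tt ii (ii l) ((l : ℕ) + 1)
  rw [sum_ite_succ l (fun h => tt h * ddF A m (ii l) (ii h))] at d2
  have expand : pay A m (Kpoint m tt ii ↑l) + pay A m (Kpoint m tt ii (↑l + 1))
      - (pay A (ii l) (Kpoint m tt ii ↑l) + pay A (ii l) (Kpoint m tt ii (↑l + 1)))
      = (pay A m (Kpoint m tt ii ↑l) - pay A (ii l) (Kpoint m tt ii ↑l))
        + (pay A m (Kpoint m tt ii (↑l + 1)) - pay A (ii l) (Kpoint m tt ii (↑l + 1))) := by
    ring
  rw [show (1:ℝ)/2 * tt l * (pay A m (Kpoint m tt ii ↑l) + pay A m (Kpoint m tt ii (↑l + 1))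
      - (pay A (ii l) (Kpoint m tt ii ↑l) + pay A (ii l) (Kpoint m tt ii (↑l + 1))))
    = 1/2 * tt l * ((pay A m (Kpoint m tt ii ↑l) - pay A (ii l) (Kpoint m tt ii ↑l))
        + (pay A m (Kpoint m tt ii (↑l + 1)) - pay A (ii l) (Kpoint m tt ii (↑l + 1)))) from by ring,
    d1, d2]
  ring

lemma omegaCost_eq {s : ℕ} (A : Fin s → Fin s → ℝ) (m : Fin s) {K : ℕ}
    (tt : Fin K → ℝ) (ii : Fin K → Fin s) (hii : ∀ h, ii h ≠ m) :
    omegaCost A m tt ii = ∑ l : Fin K, tt l * (aaF A m (ii l)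
          - (∑ h : Fin K, if (h : ℕ) < (l : ℕ) then tt h * ddF A m (ii l) (ii h) else 0)
          - tt l * ddF A m (ii l) (ii l) / 2) := by
  unfold omegaCost
  exact Finset.sum_congr rfl fun l _ => cost_term A m tt ii hii l

lemma key_ineq {s : ℕ} (m : Fin s) (d : Fin s → Fin s → ℝ)
    (hpos : ∀ j, j ≠ m → 0 < d j j)
    (hd0 : ∀ j i, j ≠ m → i ≠ m → 0 ≤ d j i)
    (hsq : ∀ j i, j ≠ m → i ≠ m → (d j i) ^ 2 ≤ d j j * d i i) :
    ∀ (K : ℕ) (tt : Fin K → ℝ) (ii : Fin K → Fin s) (a : Fin s → ℝ) (c : ℝ),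
      (∀ h, 0 ≤ tt h) → (∀ h, ii h ≠ m) →
      (∀ j, j ≠ m → (∑ h, tt h * d j (ii h)) ≤ a j) →
      (∃ j0, j0 ≠ m ∧ (∑ h, tt h * d j0 (ii h)) = a j0) →
      (∀ j, j ≠ m → c ≤ (a j) ^ 2 / (2 * d j j)) →
      c ≤ ∑ l : Fin K, tt l * (a (ii l)
            - (∑ h : Fin K, if (h : ℕ) < (l : ℕ) then tt h * d (ii l) (ii h) else 0)
            - tt l * d (ii l) (ii l) / 2) := by
  intro K
  induction K with
  | zero =>
    intro tt ii a c htt hii hcon hhit hc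
    obtain ⟨j0, hj0, hj0e⟩ := hhit
    have ha0 : a j0 = 0 := by simpa using hj0e.symm
    have h0 := hc j0 hj0
    rw [ha0] at h0
    simpa using h0
  | succ K IH =>
    intro tt ii a c htt hii hcon hhit hc
    have hxm : ii 0 ≠ m := hii 0
    set x := ii 0 with hxdef
    set t := tt 0 with htdef
    set a' : Fin s → ℝ := fun j => a j - t * d j x with ha'
    set tt' : Fin K → ℝ := fun h => tt h.succ with htt'
    set ii' : Fin K → Fin s := fun h => ii h.succ with hii'
    have hsplit : ∀ j, (∑ h : Fin (K+1), tt h * d j (ii h))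
        = t * d j x + ∑ h : Fin K, tt' h * d j (ii' h) := fun j => Fin.sum_univ_succ _
    have hcon' : ∀ j, j ≠ m → (∑ h : Fin K, tt' h * d j (ii' h)) ≤ a' j := by
      intro j hj
      have := hcon j hj
      rw [hsplit] at this
      simp only [ha']
      linarith
    have hhit' : ∃ j0, j0 ≠ m ∧ (∑ h : Fin K, tt' h * d j0 (ii' h)) = a' j0 := by
      obtain ⟨j0, hj0, he⟩ := hhit
      refine ⟨j0, hj0, ?_⟩
      rw [hsplit] at he
      simp only [ha']
      linarith
    have htail0 : ∀ j, j ≠ m → 0 ≤ ∑ h : Fin K, tt' h * d j (ii' h) :=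
      fun j hj => Finset.sum_nonneg fun h _ => mul_nonneg (htt _) (hd0 j (ii' h) hj (hii _))
    obtain ⟨j', hj'mem, hj'min⟩ := Finset.exists_min_image (Finset.univ.erase m)
      (fun j => (a' j) ^ 2 / (2 * d j j)) ⟨x, Finset.mem_erase.mpr ⟨hxm, Finset.mem_univ _⟩⟩
    have hj'm : j' ≠ m := (Finset.mem_erase.mp hj'mem).1
    have hIH := IH tt' ii' a' ((a' j') ^ 2 / (2 * d j' j')) (fun h => htt _) (fun h => hii _)
      hcon' hhit' (fun j hj => hj'min j (Finset.mem_erase.mpr ⟨hj, Finset.mem_univ _⟩))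
    have hW : (∑ l : Fin (K+1), tt l * (a (ii l)
            - (∑ h : Fin (K+1), if (h : ℕ) < (l : ℕ) then tt h * d (ii l) (ii h) else 0)
            - tt l * d (ii l) (ii l) / 2))
        = t * (a x - t * d x x / 2)
          + ∑ l : Fin K, tt' l * (a' (ii' l)
            - (∑ h : Fin K, if (h : ℕ) < (l : ℕ) then tt' h * d (ii' l) (ii' h) else 0)
            - tt' l * d (ii' l) (ii' l) / 2) := by
      rw [Fin.sum_univ_succ]
      congr 1
      · simp [htdef, hxdef]
      · refine Finset.sum_congr rfl fun l _ => ?_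
        have hinner : (∑ h : Fin (K+1), if (h : ℕ) < ((l.succ : Fin (K+1)) : ℕ)
              then tt h * d (ii l.succ) (ii h) else 0)
            = t * d (ii l.succ) x
              + ∑ h : Fin K, (if (h : ℕ) < (l : ℕ) then tt' h * d (ii' l) (ii' h) else 0) := by
          rw [Fin.sum_univ_succ]
          refine congrArg₂ (· + ·) ?_ ?_
          · simp [htdef, hxdef]
          · refine Finset.sum_congr rfl fun h _ => ?_
            have hiff : (((h.succ : Fin (K+1)) : ℕ) < ((l.succ : Fin (K+1)) : ℕ))
                ↔ ((h : ℕ) < (l : ℕ)) := by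
              simp [Fin.val_succ]
            simp only [hiff]; rfl
        rw [hinner]
        simp only [ha', hii', htt']
        ring
    rw [hW]
    have hEpos := hpos j' hj'm
    have hDpos := hpos x hxm
    have hu : 0 ≤ a' x := le_trans (htail0 x hxm) (hcon' x hxm)
    have hw : 0 ≤ a' j' := le_trans (htail0 j' hj'm) (hcon' j' hj'm)
    have hb0 : 0 ≤ d j' x := hd0 j' x hj'm hxm
    have hb2 : (d j' x) ^ 2 ≤ d j' j' * d x x := hsq j' x hj'm hxm
    have haw : (a' j') ^ 2 / (2 * d j' j') ≤ (a' x) ^ 2 / (2 * d x x) :=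
      hj'min x (Finset.mem_erase.mpr ⟨hxm, Finset.mem_univ _⟩)
    have hwu : (a' j') ^ 2 * d x x ≤ (a' x) ^ 2 * d j' j' := by
      rw [div_le_div_iff₀ (by positivity) (by positivity)] at haw
      nlinarith [haw]
    have hwb : a' j' * d j' x ≤ a' x * d j' j' := by
      nlinarith [hwu, hb2, mul_nonneg hw hb0, mul_nonneg hu hEpos.le, hDpos, hEpos,
        sq_nonneg (a' j' * d j' x - a' x * d j' j'), sq_nonneg (a' j' * d j' x + a' x * d j' j')]
    have htnn : 0 ≤ t := htt 0
    have hax : a x = a' x + t * d x x := by simp only [ha']; ring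
    have haj' : a j' = a' j' + t * d j' x := by simp only [ha']; ring
    have h2E : (0:ℝ) < 2 * d j' j' := by positivity
    have hkey : (a j') ^ 2 ≤ t * (a x - t * d x x / 2) * (2 * d j' j') + (a' j') ^ 2 := by
      rw [hax, haj']
      have e1 : (a' j' + t * d j' x) ^ 2
          = a' j' ^ 2 + 2 * t * (a' j' * d j' x) + t ^ 2 * (d j' x) ^ 2 := by ring
      have e2 : t * (a' x + t * d x x - t * d x x / 2) * (2 * d j' j')
          = 2 * t * (a' x * d j' j') + t ^ 2 * (d j' j' * d x x) := by ring
      rw [e1, e2]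
      linarith [mul_le_mul_of_nonneg_left hwb (by linarith : (0:ℝ) ≤ 2 * t),
        mul_le_mul_of_nonneg_left hb2 (sq_nonneg t)]
    have hstep : (a j') ^ 2 / (2 * d j' j')
        ≤ t * (a x - t * d x x / 2) + (a' j') ^ 2 / (2 * d j' j') := by
      calc (a j') ^ 2 / (2 * d j' j')
          ≤ (t * (a x - t * d x x / 2) * (2 * d j' j') + (a' j') ^ 2) / (2 * d j' j') := by
            rw [div_le_div_iff₀ h2E h2E]
            exact mul_le_mul_of_nonneg_right hkey h2E.le
        _ = t * (a x - t * d x x / 2) + (a' j') ^ 2 / (2 * d j' j') := by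
            field_simp
    calc c ≤ (a j') ^ 2 / (2 * d j' j') := hc j' hj'm
      _ ≤ t * (a x - t * d x x / 2) + (a' j') ^ 2 / (2 * d j' j') := hstep
      _ ≤ _ := by linarith [hIH]

lemma ddF_pos {s : ℕ} {A : Fin s → Fin s → ℝ} (hA : CondA A) {m j : Fin s} (hj : j ≠ m) :
    0 < ddF A m j j := by
  have h1 : A m m > A j m := hA.1 m j hj
  have h2 : A j j > A m j := hA.1 j m (Ne.symm hj)
  unfold ddF; linarith

lemma ddF_nonneg {s : ℕ} {A : Fin s → Fin s → ℝ} (hA : CondA A) {m j i : Fin s}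
    (hj : j ≠ m) (hi : i ≠ m) : 0 ≤ ddF A m j i := by
  rcases eq_or_ne j i with rfl | hne
  · exact (ddF_pos hA hj).le
  · have := hA.2.1 m j i (Ne.symm hj) hne (Ne.symm hi)
    unfold ddF; linarith

lemma ddF_le_left {s : ℕ} {A : Fin s → Fin s → ℝ} (hA : CondA A) {m j i : Fin s}
    (hj : j ≠ m) (hi : i ≠ m) (hne : j ≠ i) : ddF A m j i ≤ ddF A m j j := by
  have := hA.2.1 j m i hj (Ne.symm hi) hne
  unfold ddF; linarith

lemma ddF_le_right {s : ℕ} {A : Fin s → Fin s → ℝ} (hA : CondA A) {m j i : Fin s}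
    (hj : j ≠ m) (hi : i ≠ m) (hne : j ≠ i) : ddF A m j i ≤ ddF A m i i := by
  have := hA.2.1 i j m (Ne.symm hne) hj hi
  unfold ddF; linarith

lemma ddF_sq_le {s : ℕ} {A : Fin s → Fin s → ℝ} (hA : CondA A) {m j i : Fin s}
    (hj : j ≠ m) (hi : i ≠ m) : (ddF A m j i) ^ 2 ≤ ddF A m j j * ddF A m i i := by
  rcases eq_or_ne j i with rfl | hne
  · rw [sq]
  · have h0 := ddF_nonneg hA hj hi
    have h1 := ddF_le_left hA hj hi hne
    have h2 := ddF_le_right hA hj hi hne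
    have h3 := ddF_pos hA hj
    nlinarith

lemma vertex_basin {s : ℕ} {A : Fin s → Fin s → ℝ} (hA : CondA A) (m : Fin s) :
    vertex m ∈ basinC A m := by
  refine ⟨⟨fun i => ?_, ?_⟩, fun l => ?_⟩
  · unfold vertex; split_ifs <;> norm_num
  · unfold vertex; simp
  · rw [pay_vertex, pay_vertex]
    rcases eq_or_ne l m with rfl | hl
    · exact le_refl _
    · exact (hA.1 m l hl).le

lemma sum_ite_lt_K {K : ℕ} (g : Fin K → ℝ) :
    (∑ h : Fin K, if (h : ℕ) < K then g h else 0) = ∑ h : Fin K, g h :=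
  Finset.sum_congr rfl fun h _ => if_pos h.isLt

lemma omega_lower {s : ℕ} {A : Fin s → Fin s → ℝ} (hA : CondA A) (m : Fin s) {K : ℕ}
    (tt : Fin K → ℝ) (ii : Fin K → Fin s) (hadm : admissibleK A m tt ii) {cstar : ℝ}
    (hcs : ∀ j, j ≠ m → cstar ≤ (aaF A m j) ^ 2 / (2 * ddF A m j j)) :
    cstar ≤ omegaCost A m tt ii := by
  obtain ⟨hinj, hiim, hIcc, hbasin, j0, hj0m, hj0eq⟩ := hadm
  rw [omegaCost_eq A m tt ii hiim]
  refine key_ineq m (ddF A m) (fun j hj => ddF_pos hA hj)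
    (fun j i hj hi => ddF_nonneg hA hj hi) (fun j i hj hi => ddF_sq_le hA hj hi)
    K tt ii (aaF A m) cstar (fun h => (hIcc h).1) hiim ?_ ?_ hcs
  · intro j hj
    have hb := (hbasin K le_rfl).2 j
    have hd := paydiff A m tt ii j K
    rw [sum_ite_lt_K] at hd
    linarith [hd, hb]
  · refine ⟨j0, hj0m, ?_⟩
    have hd := paydiff A m tt ii j0 K
    rw [sum_ite_lt_K, hj0eq] at hd
    linarith [hd]

theorem one_kind_of_mistake'
    (s : ℕ) (hs : 2 ≤ s)
    (A : Fin s → Fin s → ℝ) (hA : CondA A) (m : Fin s) :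
    ∃ (K : ℕ) (tt : Fin K → ℝ) (ii : Fin K → Fin s),
      admissibleK A m tt ii ∧
      omegaCost A m tt ii = sInf (omegaSet A m) ∧
      ∃ k : Fin K, tt k > 0 ∧ ∀ l, l ≠ k → tt l = 0 := by
  -- some strategy other than m
  have hex : ∃ z : Fin s, z ≠ m := by
    rcases Nat.eq_zero_or_pos m.val with h0 | hp
    · refine ⟨⟨1, by omega⟩, fun e => ?_⟩
      have := congrArg Fin.val e; simp [h0] at this
    · refine ⟨⟨0, by omega⟩, fun e => ?_⟩
      have := congrArg Fin.val e; simp at this; omega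
  obtain ⟨z, hz⟩ := hex
  -- the optimal target strategy
  obtain ⟨j', hjmem, hjmin⟩ := Finset.exists_min_image (Finset.univ.erase m)
    (fun j => (aaF A m j) ^ 2 / (2 * ddF A m j j))
    ⟨z, Finset.mem_erase.mpr ⟨hz, Finset.mem_univ _⟩⟩
  have hjm : j' ≠ m := (Finset.mem_erase.mp hjmem).1
  -- the mixed equilibrium with support {m, j'}
  obtain ⟨p, hp0, hpsum, hpsupp, hpNE⟩ := hA.2.2 ({m, j'} : Finset (Fin s)) ⟨m, by simp⟩
  have hmemm : m ∈ ({m, j'} : Finset (Fin s)) := by simp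
  have hmemj : j' ∈ ({m, j'} : Finset (Fin s)) := by simp
  have hpm0 : ∀ i, i ∉ ({m, j'} : Finset (Fin s)) → p i = 0 :=
    fun i hi => not_not.mp (mt (hpsupp i).mp hi)
  have hsum2 : p m + p j' = 1 := by
    have h := hpsum
    rw [← Finset.sum_subset (Finset.subset_univ ({m, j'} : Finset (Fin s)))
      (fun i _ hi => hpm0 i hi)] at h
    rwa [Finset.sum_pair (Ne.symm hjm)] at h
  set θ : ℝ := p j' with hθdef
  have hθ0 : 0 ≤ θ := hp0 j'
  have hθpos : 0 < θ := lt_of_le_of_ne (hp0 j') (Ne.symm ((hpsupp j').mpr hmemj))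
  have hθ1 : θ ≤ 1 := by
    have h := Finset.single_le_sum (f := p) (fun i _ => hp0 i) (Finset.mem_univ j')
    rw [hpsum] at h; exact h
  set tt1 : Fin 1 → ℝ := fun _ => θ with htt1
  set ii1 : Fin 1 → Fin s := fun _ => j' with hii1
  have hP1 : Kpoint m tt1 ii1 1 = p := by
    funext h
    unfold Kpoint
    rw [Fin.sum_univ_one]
    have : ((0 : Fin 1) : ℕ) < 1 := by norm_num
    rw [if_pos this]
    by_cases hhm : h = m
    · rw [hhm]
      have h1 : vertex m m = 1 := if_pos rfl
      have h2 : vertex j' m = 0 := if_neg (Ne.symm hjm)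
      rw [show ii1 0 = j' from rfl, h1, h2]
      have e : tt1 0 = θ := rfl
      rw [e]; linarith [hsum2]
    · by_cases hhj : h = j'
      · rw [hhj]
        have h1 : vertex m j' = 0 := if_neg hjm
        have h2 : vertex j' j' = 1 := if_pos rfl
        rw [show ii1 0 = j' from rfl, h1, h2]
        have e : tt1 0 = θ := rfl
        rw [e]; ring
      · have h1 : vertex m h = 0 := if_neg hhm
        have h2 : vertex j' h = 0 := if_neg hhj
        rw [show ii1 0 = j' from rfl, h1, h2]
        have h3 : p h = 0 := hpm0 h (by simp [hhm, hhj])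
        rw [h3]; ring
  have hP0 : Kpoint m tt1 ii1 0 = vertex m := by
    funext h; unfold Kpoint; simp
  have hb : pay A m p = pay A j' p :=
    le_antisymm (hpNE j' hmemj m) (hpNE m hmemm j')
  have hadm : admissibleK A m tt1 ii1 := by
    refine ⟨fun x y _ => Subsingleton.elim x y, fun _ => hjm, fun _ => ⟨hθ0, hθ1⟩, ?_, j', hjm, ?_⟩
    · intro l hl
      interval_cases l
      · rw [hP0]; exact vertex_basin hA m
      · rw [hP1]; exact ⟨⟨hp0, hpsum⟩, fun l => hpNE m hmemm l⟩
    · rw [hP1]; exact hb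
  have hdd := ddF_pos hA hjm
  have hθd : aaF A m j' = θ * ddF A m j' j' := by
    have hd := paydiff A m tt1 ii1 j' 1
    rw [hP1, Fin.sum_univ_one] at hd
    have h01 : ((0 : Fin 1) : ℕ) < 1 := by norm_num
    rw [if_pos h01, hb] at hd
    have : tt1 0 * ddF A m j' (ii1 0) = θ * ddF A m j' j' := rfl
    rw [this] at hd
    linarith [hd]
  have hcost : omegaCost A m tt1 ii1 = (aaF A m j') ^ 2 / (2 * ddF A m j' j') := by
    rw [omegaCost_eq A m tt1 ii1 (fun _ => hjm), Fin.sum_univ_one]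
    have h00 : ¬ (((0 : Fin 1) : ℕ) < ((0 : Fin 1) : ℕ)) := by norm_num
    rw [Fin.sum_univ_one, if_neg h00]
    have e1 : tt1 0 = θ := rfl
    have e2 : ii1 0 = j' := rfl
    rw [e1, e2, hθd]
    field_simp
    ring
  have hcs : ∀ j, j ≠ m →
      (aaF A m j') ^ 2 / (2 * ddF A m j' j') ≤ (aaF A m j) ^ 2 / (2 * ddF A m j j) :=
    fun j hj => hjmin j (Finset.mem_erase.mpr ⟨hj, Finset.mem_univ _⟩)
  have hlb : ∀ r ∈ omegaSet A m, (aaF A m j') ^ 2 / (2 * ddF A m j' j') ≤ r := by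
    rintro r ⟨K, tt2, ii2, hadm2, rfl⟩
    exact omega_lower hA m tt2 ii2 hadm2 hcs
  have hmem : omegaCost A m tt1 ii1 ∈ omegaSet A m := ⟨1, tt1, ii1, hadm, rfl⟩
  have hsinf : omegaCost A m tt1 ii1 = sInf (omegaSet A m) := by
    refine le_antisymm ?_ (csInf_le ⟨_, hlb⟩ hmem)
    rw [hcost]
    exact le_csInf ⟨_, hmem⟩ hlb
  exact ⟨1, tt1, ii1, hadm, hsinf, 0, hθpos, fun l hl => absurd (Subsingleton.elim l 0) hl⟩


/-- **One kind of mistake at the optimum (Proposition A.3).** -/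
theorem one_kind_of_mistake
    (s : ℕ) (hs : 2 ≤ s)
    (A : Fin s → Fin s → ℝ) (hA : CondA A) (m : Fin s) :
    ∃ (K : ℕ) (tt : Fin K → ℝ) (ii : Fin K → Fin s),
      admissibleK A m tt ii ∧
      omegaCost A m tt ii = sInf (omegaSet A m) ∧
      ∃ k : Fin K, tt k > 0 ∧ ∀ l, l ≠ k → tt l = 0 :=
  one_kind_of_mistake' s hs A hA m
end
end

section
/- (Cheaper exit with a single binding constraint, Lemma A.3.) Assume Condition A. Let m̄ be a convention, r ∈ D̄(e_{m̄}), and q = r + t_L(e_l − e_{m̄}) ∈ D̄(e_{m̄}) with t_L > 0 and l ≠ m̄, and suppose there exist two distinct strategies k_1, k_2 (both ≠ m̄) with π(m̄,q) = π(k_1,q) and π(m̄,q) = π(k_2,q). Then there exist a strategy j ∉ {l, m̄} and a number β with 0 < β < t_L such that the point p = r + β(e_j − e_{m̄}) lies in D̄(e_{m̄}), satisfies π(m̄,p) = π(j,p), and c̄(r,p) < c̄(r,q). -/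
open Finset Filter

noncomputable section

lemma arith1 {al ax tL Mxx Mlx Mll : ℝ} (h1 : al * Mxx < ax * Mlx) (h2 : ax < tL * Mxx)
    (h3 : Mlx < Mll) (h4 : tL * Mll ≤ al) (hMxx : 0 < Mxx) (hMlx : 0 < Mlx)
    (htL : 0 < tL) : False := by
  have a := mul_lt_mul_of_pos_right h2 hMlx
  have b := mul_lt_mul_of_pos_right (mul_lt_mul_of_pos_left h3 htL) hMxx
  have c := mul_le_mul_of_nonneg_right h4 hMxx.le
  have e1 : tL * Mxx * Mlx = tL * Mlx * Mxx := by ring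
  linarith

lemma arith2 {au ax tL Mxx Mux Muu : ℝ} (h1 : au * Mxx < ax * Mux) (h2 : ax < tL * Mxx)
    (h3 : Mux < Muu) (hMxx : 0 < Mxx) (hMux : 0 < Mux) (htL : 0 < tL) :
    au < tL * Muu := by
  have a := mul_lt_mul_of_pos_right h2 hMux
  have b := mul_lt_mul_of_pos_right (mul_lt_mul_of_pos_left h3 htL) hMxx
  have e1 : tL * Mxx * Mux = tL * Mux * Mxx := by ring
  have kk : au * Mxx < (tL * Muu) * Mxx := by linarith
  exact lt_of_mul_lt_mul_right kk hMxx.le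

lemma arith3 {au ax tL Mll Mxx Mux Muu : ℝ} (hlt : au * Mxx < ax * Mux)
    (h1 : ax * ax < tL ^ 2 * (Mll * Mxx)) (hr : Mux < Muu) (hc : Mux < Mxx)
    (hau : 0 < au) (hax : 0 < ax) (hMxx : 0 < Mxx) (hMux : 0 < Mux) (hMll : 0 < Mll)
    (htL : 0 < tL) : au * au < tL ^ 2 * (Mll * Muu) := by
  have h0 : (0:ℝ) ≤ au * Mxx := by positivity
  have ha' := mul_self_lt_mul_self h0 hlt
  have ha : au * au * (Mxx * Mxx) < (ax * ax) * (Mux * Mux) := by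
    have e : (au * Mxx) * (au * Mxx) = au * au * (Mxx * Mxx) := by ring
    have e2 : (ax * Mux) * (ax * Mux) = (ax * ax) * (Mux * Mux) := by ring
    linarith
  have hb : (ax * ax) * (Mux * Mux) < (tL ^ 2 * (Mll * Mxx)) * (Mux * Mux) :=
    mul_lt_mul_of_pos_right h1 (by positivity)
  have hc2 : Mux * Mux < Mxx * Muu := by
    have a := mul_lt_mul_of_pos_right hc hMux
    have b := mul_lt_mul_of_pos_left hr hMxx
    have e : Mxx * Mux = Mux * Mxx := by ring
    linarith
  have hd : (tL ^ 2 * (Mll * Mxx)) * (Mux * Mux) < (tL ^ 2 * (Mll * Mxx)) * (Mxx * Muu) :=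
    mul_lt_mul_of_pos_left hc2 (by positivity)
  have he : au * au * (Mxx * Mxx) < (tL ^ 2 * (Mll * Muu)) * (Mxx * Mxx) := by
    have e : (tL ^ 2 * (Mll * Mxx)) * (Mxx * Muu) = (tL ^ 2 * (Mll * Muu)) * (Mxx * Mxx) := by
      ring
    linarith
  exact lt_of_mul_lt_mul_right he (by positivity)

lemma arith4 {aw au ax Mxx Muu Mww : ℝ} (h1 : aw * Muu < au * Mww) (h2 : au * Mxx < ax * Muu)
    (hMuu : 0 < Muu) (hMxx : 0 < Mxx) (hMww : 0 < Mww) : aw * Mxx < ax * Mww := by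
  have ha := mul_lt_mul_of_pos_right h1 hMxx
  have hb := mul_lt_mul_of_pos_right h2 hMww
  have e1 : aw * Muu * Mxx = aw * Mxx * Muu := by ring
  have e2 : au * Mww * Mxx = au * Mxx * Mww := by ring
  have e3 : ax * Muu * Mww = ax * Mww * Muu := by ring
  have key : aw * Mxx * Muu < ax * Mww * Muu := by linarith
  exact lt_of_mul_lt_mul_right key hMuu.le

lemma arith5 {aj al tL Mll Mjj β : ℝ} (hβ : β * Mjj = aj) (h1 : aj * aj < tL ^ 2 * (Mll * Mjj))
    (h2 : tL * Mll ≤ al) (htL : 0 < tL) (hMjj : 0 < Mjj) :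
    β * aj < tL * (2 * al - tL * Mll) := by
  have hb := mul_le_mul_of_nonneg_right h2 (mul_pos htL hMjj).le
  have key : β * aj * Mjj < tL * (2 * al - tL * Mll) * Mjj := by
    have e1 : β * aj * Mjj = aj * aj := by rw [← hβ]; ring
    have e2 : tL * Mll * (tL * Mjj) = tL ^ 2 * (Mll * Mjj) := by ring
    have e3 : al * (tL * Mjj) = tL * al * Mjj := by ring
    nlinarith
  exact lt_of_mul_lt_mul_right key hMjj.le

lemma arith6 {ak tL Mkl Mll Mkk : ℝ} (hbind : ak = tL * Mkl) (h1 : Mkl < Mkk)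
    (h2 : Mkl < Mll) (hMkl : 0 < Mkl) (hMll : 0 < Mll) (htL : 0 < tL) :
    ak < tL * Mkk ∧ ak * ak < tL ^ 2 * (Mll * Mkk) := by
  constructor
  · rw [hbind]; exact mul_lt_mul_of_pos_left h1 htL
  · rw [hbind]
    have a := mul_lt_mul_of_pos_right h2 hMkl
    have b := mul_lt_mul_of_pos_left h1 hMll
    have c : Mkl * Mkl < Mll * Mkk := by linarith
    have d := mul_lt_mul_of_pos_left c (mul_pos htL htL)
    have e : tL * Mkl * (tL * Mkl) = tL * tL * (Mkl * Mkl) := by ring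
    have f : tL ^ 2 * (Mll * Mkk) = tL * tL * (Mll * Mkk) := by ring
    linarith

lemma pay_shift {s : ℕ} (A : Fin s → Fin s → ℝ) (u v w : Fin s) (x : Fin s → ℝ) (t : ℝ) :
    pay A u (fun h => x h + t * (vertex v h - vertex w h))
      = pay A u x + t * (A u v - A u w) := by
  unfold pay vertex
  have step : ∀ j ∈ Finset.univ (α := Fin s),
      A u j * (x j + t * ((if j = v then (1:ℝ) else 0) - if j = w then 1 else 0))
        = A u j * x j + (t * ((if j = v then A u j else 0) - (if j = w then A u j else 0))) := by
    intro j _; split_ifs <;> ring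
  rw [Finset.sum_congr rfl step, Finset.sum_add_distrib, ← Finset.mul_sum,
    Finset.sum_sub_distrib, Finset.sum_ite_eq', Finset.sum_ite_eq']
  simp

lemma pay_add {s : ℕ} (A : Fin s → Fin s → ℝ) (u : Fin s) (x y : Fin s → ℝ) :
    pay A u (x + y) = pay A u x + pay A u y := by
  unfold pay
  rw [← Finset.sum_add_distrib]
  exact Finset.sum_congr rfl fun j _ => by simp [Pi.add_apply]; ring

lemma vertex_sum {s : ℕ} (j : Fin s) : ∑ h, vertex j h = 1 := by
  unfold vertex
  rw [Finset.sum_ite_eq']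
  simp

lemma aux_chain {s : ℕ} (m l : Fin s) (a : Fin s → ℝ) (M : Fin s → Fin s → ℝ)
    (tL : ℝ) (htL : 0 < tL)
    (hMpos : ∀ u v : Fin s, u ≠ m → v ≠ m → 0 < M u v)
    (hrow : ∀ u v : Fin s, u ≠ m → v ≠ m → u ≠ v → M u v < M u u)
    (hcol : ∀ u v : Fin s, u ≠ m → v ≠ m → u ≠ v → M u v < M v v)
    (hlm : l ≠ m)
    (hfeas : ∀ u : Fin s, u ≠ m → tL * M u l ≤ a u)
    (k : Fin s) (hkm : k ≠ m) (hkl : k ≠ l)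
    (hbind : a k = tL * M k l) :
    ∃ j : Fin s, j ≠ m ∧ j ≠ l ∧ 0 < a j ∧ a j < tL * M j j ∧
      a j * a j < tL ^ 2 * (M l l * M j j) ∧ ∀ u, u ≠ m → a j * M u j ≤ a u * M j j := by
  have hapos : ∀ u : Fin s, u ≠ m → 0 < a u := fun u hu =>
    lt_of_lt_of_le (mul_pos htL (hMpos u l hu hlm)) (hfeas u hu)
  have main : ∀ n : ℕ, ∀ x : Fin s, x ≠ m → x ≠ l → a x < tL * M x x →
      a x * a x < tL ^ 2 * (M l l * M x x) →
      (Finset.univ.filter (fun u => u ≠ m ∧ a u * M x x < a x * M u u)).card ≤ n →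
      ∃ j : Fin s, j ≠ m ∧ j ≠ l ∧ 0 < a j ∧ a j < tL * M j j ∧
        a j * a j < tL ^ 2 * (M l l * M j j) ∧ ∀ u, u ≠ m → a j * M u j ≤ a u * M j j := by
    intro n
    induction n with
    | zero =>
      intro x hxm hxl h2 h1 hcard
      by_cases hgood : ∀ u, u ≠ m → a x * M u x ≤ a u * M x x
      · exact ⟨x, hxm, hxl, hapos x hxm, h2, h1, hgood⟩
      · exfalso
        push_neg at hgood
        obtain ⟨u, hum, hlt⟩ := hgood
        have hux : u ≠ x := by
          rintro rfl; exact absurd hlt (lt_irrefl _)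
        have hmem : u ∈ Finset.univ.filter
            (fun u => u ≠ m ∧ a u * M x x < a x * M u u) := by
          simp only [Finset.mem_filter, Finset.mem_univ, true_and]
          exact ⟨hum, lt_of_lt_of_le hlt
            (mul_le_mul_of_nonneg_left (hrow u x hum hxm hux).le (hapos x hxm).le)⟩
        have := Finset.card_pos.mpr ⟨u, hmem⟩
        omega
    | succ n ih =>
      intro x hxm hxl h2 h1 hcard
      by_cases hgood : ∀ u, u ≠ m → a x * M u x ≤ a u * M x x
      · exact ⟨x, hxm, hxl, hapos x hxm, h2, h1, hgood⟩
      · push_neg at hgood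
        obtain ⟨u, hum, hlt⟩ := hgood
        have hux : u ≠ x := by
          rintro rfl; exact absurd hlt (lt_irrefl _)
        have hMxx := hMpos x x hxm hxm
        have hMux := hMpos u x hum hxm
        have hrux := hrow u x hum hxm hux
        have hcux := hcol u x hum hxm hux
        have hul : u ≠ l := by
          rintro rfl
          exact arith1 hlt h2 (hrow u x hum hxm hux) (hfeas u hum) hMxx hMux htL
        have h2u : a u < tL * M u u := arith2 hlt h2 hrux hMxx hMux htL
        have h1u : a u * a u < tL ^ 2 * (M l l * M u u) :=
          arith3 hlt h1 hrux hcux (hapos u hum) (hapos x hxm) hMxx hMux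
            (hMpos l l hlm hlm) htL
        have hx_u : a u * M x x < a x * M u u :=
          lt_of_lt_of_le hlt
            (mul_le_mul_of_nonneg_left hrux.le (hapos x hxm).le)
        have hcardu : (Finset.univ.filter
            (fun w => w ≠ m ∧ a w * M u u < a u * M w w)).card ≤ n := by
          have hss : (Finset.univ.filter (fun w => w ≠ m ∧ a w * M u u < a u * M w w)) ⊂
              (Finset.univ.filter (fun w => w ≠ m ∧ a w * M x x < a x * M w w)) := by
            constructor
            · intro w hw
              simp only [Finset.mem_filter, Finset.mem_univ, true_and] at hw ⊢
              obtain ⟨hwm, hwlt⟩ := hw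
              exact ⟨hwm, arith4 hwlt hx_u (hMpos u u hum hum) hMxx (hMpos w w hwm hwm)⟩
            · intro hsup
              have humem : u ∈ Finset.univ.filter
                  (fun w => w ≠ m ∧ a w * M x x < a x * M w w) := by
                simp only [Finset.mem_filter, Finset.mem_univ, true_and]
                exact ⟨hum, hx_u⟩
              have h5 := hsup humem
              simp only [Finset.mem_filter, Finset.mem_univ, true_and] at h5
              exact absurd h5.2 (lt_irrefl _)
          have := Finset.card_lt_card hss
          omega
        exact ih u hum hul h2u h1u hcardu
  have h6 := arith6 hbind (hrow k l hkm hlm hkl) (hcol k l hkm hlm hkl)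
    (hMpos k l hkm hlm) (hMpos l l hlm hlm) htL
  exact main _ k hkm hkl h6.1 h6.2 le_rfl

/-- **Cheaper exit with a single binding constraint (Lemma A.3).** -/
theorem cheaper_exit_single_binding
    (s : ℕ) (hs : 2 ≤ s)
    (A : Fin s → Fin s → ℝ) (hA : CondA A)
    (m l k₁ k₂ : Fin s) (hl : l ≠ m)
    (hk : k₁ ≠ k₂) (hk₁ : k₁ ≠ m) (hk₂ : k₂ ≠ m)
    (r : Fin s → ℝ) (hr : r ∈ basinC A m)
    (tL : ℝ) (htL : 0 < tL)
    (q : Fin s → ℝ)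
    (hqdef : q = fun h => r h + tL * (vertex l h - vertex m h))
    (hq : q ∈ basinC A m)
    (hb₁ : pay A m q = pay A k₁ q) (hb₂ : pay A m q = pay A k₂ q) :
    ∃ (j : Fin s) (β : ℝ), j ≠ l ∧ j ≠ m ∧ 0 < β ∧ β < tL ∧
      (fun h => r h + β * (vertex j h - vertex m h)) ∈ basinC A m ∧
      pay A m (fun h => r h + β * (vertex j h - vertex m h))
        = pay A j (fun h => r h + β * (vertex j h - vertex m h)) ∧
      cbar A m j m r (fun h => r h + β * (vertex j h - vertex m h))
        < cbar A m l m r q := by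
  obtain ⟨hco, hmbp, -⟩ := hA
  -- matrix positivity / dominance facts
  have hMpos : ∀ u v : Fin s, u ≠ m → v ≠ m →
      0 < (A m m - A u m) - (A m v - A u v) := by
    intro u v hum hvm
    by_cases huv : u = v
    · subst huv
      have h1 : A m m > A u m := hco m u hum
      have h2 : A u u > A m u := hco u m (Ne.symm hum)
      linarith
    · have := hmbp m u v (Ne.symm hum) huv (Ne.symm hvm)
      linarith
  have hrow : ∀ u v : Fin s, u ≠ m → v ≠ m → u ≠ v →
      (A m m - A u m) - (A m v - A u v) < (A m m - A u m) - (A m u - A u u) := by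
    intro u v hum hvm huv
    have := hmbp u m v hum (Ne.symm hvm) huv
    linarith
  have hcol : ∀ u v : Fin s, u ≠ m → v ≠ m → u ≠ v →
      (A m m - A u m) - (A m v - A u v) < (A m m - A v m) - (A m v - A v v) := by
    intro u v hum hvm huv
    have := hmbp v u m (Ne.symm huv) hum hvm
    linarith
  -- payoff along the segment to q
  have hq' : ∀ u : Fin s, pay A u q = pay A u r + tL * (A u l - A u m) := by
    intro u; rw [hqdef]; exact pay_shift A u l m r tL
  have hfeas : ∀ u : Fin s, u ≠ m →
      tL * ((A m m - A u m) - (A m l - A u l)) ≤ pay A m r - pay A u r := by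
    intro u hum
    have h5 := hq.2 u
    rw [hq' u, hq' m] at h5
    linarith [h5]
  -- a binder distinct from l
  obtain ⟨k, hkm, hkl, hbindk⟩ : ∃ k : Fin s, k ≠ m ∧ k ≠ l ∧ pay A m q = pay A k q := by
    by_cases h : k₁ = l
    · exact ⟨k₂, hk₂, fun hh => hk (h.trans hh.symm), hb₂⟩
    · exact ⟨k₁, hk₁, h, hb₁⟩
  have hbind : pay A m r - pay A k r = tL * ((A m m - A k m) - (A m l - A k l)) := by
    have h5 := hbindk
    rw [hq' m, hq' k] at h5
    linear_combination h5
  obtain ⟨j, hjm, hjl, hjpos, hj2, hj1, hgood⟩ :=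
    aux_chain m l (fun u => pay A m r - pay A u r)
      (fun u v => (A m m - A u m) - (A m v - A u v)) tL htL hMpos hrow hcol hl hfeas
      k hkm hkl hbind
  -- restate the chain conclusions with explicit expressions
  have hjpos' : 0 < pay A m r - pay A j r := hjpos
  have hj2' : pay A m r - pay A j r < tL * ((A m m - A j m) - (A m j - A j j)) := hj2
  have hj1' : (pay A m r - pay A j r) * (pay A m r - pay A j r)
      < tL ^ 2 * (((A m m - A l m) - (A m l - A l l))
        * ((A m m - A j m) - (A m j - A j j))) := hj1
  have hgood' : ∀ u : Fin s, u ≠ m →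
      (pay A m r - pay A j r) * ((A m m - A u m) - (A m j - A u j))
        ≤ (pay A m r - pay A u r) * ((A m m - A j m) - (A m j - A j j)) := hgood
  have hMjj : 0 < (A m m - A j m) - (A m j - A j j) := hMpos j j hjm hjm
  set β : ℝ := (pay A m r - pay A j r) / ((A m m - A j m) - (A m j - A j j)) with hβdef
  have hβpos : 0 < β := div_pos hjpos' hMjj
  have hβlt : β < tL := (div_lt_iff₀ hMjj).mpr hj2'
  have hβM : β * ((A m m - A j m) - (A m j - A j j)) = pay A m r - pay A j r := by
    rw [hβdef]; field_simp
  -- some vertex computations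
  have hvjm : vertex j m = (0:ℝ) := if_neg (Ne.symm hjm)
  have hvmm : vertex m m = (1:ℝ) := if_pos rfl
  have hvjj : vertex j j = (1:ℝ) := if_pos rfl
  have hvmj : vertex m j = (0:ℝ) := if_neg hjm
  have hrm : tL ≤ r m := by
    have h0 := hq.1.1 m
    rw [hqdef] at h0
    have hvlm : vertex l m = (0:ℝ) := if_neg (Ne.symm hl)
    simp only [hvlm, hvmm] at h0
    linarith
  -- payoffs at p
  have hpshift : ∀ u : Fin s,
      pay A u (fun h => r h + β * (vertex j h - vertex m h))
        = pay A u r + β * (A u j - A u m) := fun u => pay_shift A u j m r β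
  have hpayeq : pay A m (fun h => r h + β * (vertex j h - vertex m h))
      = pay A j (fun h => r h + β * (vertex j h - vertex m h)) := by
    rw [hpshift m, hpshift j]
    linear_combination -hβM
  have hbasin : (fun h => r h + β * (vertex j h - vertex m h)) ∈ basinC A m := by
    refine ⟨⟨?_, ?_⟩, ?_⟩
    · intro i
      by_cases him : i = m
      · rw [him]
        simp only [hvjm, hvmm]
        have h0 := hr.1.1 m
        linarith [hrm, hβlt]
      · by_cases hij : i = j
        · rw [hij]
          simp only [hvjj, hvmj]
          have h0 := hr.1.1 j
          linarith [hβpos]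
        · have hv1 : vertex j i = (0:ℝ) := if_neg hij
          have hv2 : vertex m i = (0:ℝ) := if_neg him
          simp only [hv1, hv2]
          have h0 := hr.1.1 i
          linarith
    · have step : ∀ i ∈ Finset.univ (α := Fin s),
          r i + β * (vertex j i - vertex m i)
            = r i + (β * vertex j i - β * vertex m i) := fun i _ => by ring
      rw [Finset.sum_congr rfl step, Finset.sum_add_distrib, Finset.sum_sub_distrib,
        ← Finset.mul_sum, ← Finset.mul_sum, vertex_sum, vertex_sum, hr.1.2]
      ring
    · intro u
      by_cases hum : u = m
      · subst hum; exact le_refl _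
      · rw [hpshift m, hpshift u]
        have hd : β * ((A m m - A u m) - (A m j - A u j)) ≤ pay A m r - pay A u r := by
          rw [hβdef, div_mul_eq_mul_div, div_le_iff₀ hMjj]
          exact hgood' u hum
        linarith [hd]
  refine ⟨j, β, hjl, hjm, hβpos, hβlt, hbasin, hpayeq, ?_⟩
  -- cost comparison
  have hpm : (fun h => r h + β * (vertex j h - vertex m h)) m = r m - β := by
    simp only [hvjm, hvmm]; ring
  have hqm : q m = r m - tL := by
    rw [hqdef]
    have hvlm : vertex l m = (0:ℝ) := if_neg (Ne.symm hl)
    simp only [hvlm, hvmm]; ring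
  have e1 : cbar A m j m r (fun h => r h + β * (vertex j h - vertex m h))
      = 1 / 2 * (β * (pay A m r - pay A j r)) := by
    unfold cbar
    rw [pay_add, pay_add, hpm, hpayeq]
    ring
  have e2 : cbar A m l m r q
      = 1 / 2 * (tL * (2 * (pay A m r - pay A l r)
          - tL * ((A m m - A l m) - (A m l - A l l)))) := by
    unfold cbar
    rw [pay_add, pay_add, hqm, hq' m, hq' l]
    ring
  rw [e1, e2]
  have hfl : tL * ((A m m - A l m) - (A m l - A l l)) ≤ pay A m r - pay A l r :=
    hfeas l hl
  have key := arith5 hβM hj1' hfl htL hMjj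
  linarith [key]
end
end

section
/- (Intentionality implies equality — Proposition 6 / Lemma D.4.) Let s̄ > 0 and let f : [0, s̄] → ℝ be twice differentiable with f(x) > 0, f′(x) < 0, and f″(x) < 0 for all x ∈ (0, s̄). Suppose there exist points s^{NB}, s^{I}, s^{E} ∈ (0, s̄) satisfying −f′(s^{NB}) = f(s^{NB})/s^{NB} (the Nash bargaining solution), −f′(s^{I}) = (f(s^{I})/s^{I})² (the intentional logit solution), and f(s^{E}) = s^{E} (the egalitarian solution). Then: (i) if s^{NB} > s^{E}, then s^{NB} > s^{I} > s^{E}, and moreover −f′(s^{I})·s^{I}/f(s^{I}) < 1 and −f′(s^{NB}) < 1; (ii) if s^{NB} < s^{E}, then s^{NB} < s^{I} < s^{E}, and moreover −f′(s^{I})·s^{I}/f(s^{I}) > 1 and −f′(s^{NB}) > 1. In particular, the intentional logit bargaining solution s^{I} always lies strictly between the Nash bargaining solution and the egalitarian solution whenever these two differ. -/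
open Set

/-- **Intentionality implies equality (Proposition 6 / Lemma D.4).**
`sNB` is the Nash bargaining solution, `sI` the intentional logit solution and
`sE` the egalitarian solution for the strictly decreasing, strictly concave
bargaining frontier `f`. -/
theorem intentionality_implies_equality
    (sb : ℝ) (hsb : 0 < sb) (f : ℝ → ℝ)
    (hdiff : ∀ x ∈ Set.Icc (0 : ℝ) sb, DifferentiableAt ℝ f x)
    (hdiff2 : ∀ x ∈ Set.Icc (0 : ℝ) sb, DifferentiableAt ℝ (deriv f) x)
    (hpos : ∀ x ∈ Set.Ioo (0 : ℝ) sb, 0 < f x)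
    (hder : ∀ x ∈ Set.Ioo (0 : ℝ) sb, deriv f x < 0)
    (hconc : ∀ x ∈ Set.Ioo (0 : ℝ) sb, deriv (deriv f) x < 0)
    (sNB sI sE : ℝ)
    (hNBmem : sNB ∈ Set.Ioo (0 : ℝ) sb)
    (hImem : sI ∈ Set.Ioo (0 : ℝ) sb)
    (hEmem : sE ∈ Set.Ioo (0 : ℝ) sb)
    (hNB : -deriv f sNB = f sNB / sNB)
    (hI : -deriv f sI = (f sI / sI) ^ 2)
    (hE : f sE = sE) :
    (sNB > sE →
      sNB > sI ∧ sI > sE ∧ -deriv f sI * sI / f sI < 1 ∧ -deriv f sNB < 1) ∧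
    (sNB < sE →
      sNB < sI ∧ sI < sE ∧ -deriv f sI * sI / f sI > 1 ∧ -deriv f sNB > 1) := by
  have fanti : StrictAntiOn f (Set.Icc 0 sb) :=
    strictAntiOn_of_deriv_neg (convex_Icc _ _)
      (fun x hx => (hdiff x hx).continuousAt.continuousWithinAt)
      (by rw [interior_Icc]; exact hder)
  have danti : StrictAntiOn (deriv f) (Set.Icc 0 sb) :=
    strictAntiOn_of_deriv_neg (convex_Icc _ _)
      (fun x hx => (hdiff2 x hx).continuousAt.continuousWithinAt)
      (by rw [interior_Icc]; exact hconc)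
  have hmono : ∀ x ∈ Set.Ioo (0:ℝ) sb, ∀ y ∈ Set.Ioo (0:ℝ) sb, x < y →
      -deriv f x < -deriv f y := fun x hx y hy hxy =>
    neg_lt_neg (danti (Ioo_subset_Icc_self hx) (Ioo_subset_Icc_self hy) hxy)
  have gdec : ∀ x ∈ Set.Ioo (0:ℝ) sb, ∀ y ∈ Set.Ioo (0:ℝ) sb, x < y →
      f y / y < f x / x := by
    intro x hx y hy hxy
    have h1 : f y < f x :=
      fanti (Ioo_subset_Icc_self hx) (Ioo_subset_Icc_self hy) hxy
    have hfx : 0 < f x := hpos x hx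
    calc f y / y < f x / y := by gcongr; exact hy.1
      _ < f x / x := by
          apply div_lt_div_of_pos_left hfx hx.1 hxy
  have hfNB : 0 < f sNB := hpos sNB hNBmem
  have hfI : 0 < f sI := hpos sI hImem
  have gNBpos : 0 < f sNB / sNB := div_pos hfNB hNBmem.1
  have gIpos : 0 < f sI / sI := div_pos hfI hImem.1
  have hEne : sE ≠ 0 := ne_of_gt hEmem.1
  have hIne : sI ≠ 0 := ne_of_gt hImem.1
  have hfIne : f sI ≠ 0 := ne_of_gt hfI
  have ratio_eq : -deriv f sI * sI / f sI = f sI / sI := by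
    rw [hI]; field_simp
  constructor
  · intro hgt
    have g1 : f sNB / sNB < 1 := by
      have := gdec sE hEmem sNB hNBmem hgt
      rwa [hE, div_self hEne] at this
    have hNBlt1 : -deriv f sNB < 1 := by rw [hNB]; exact g1
    have hIlt : sI < sNB := by
      by_contra hc
      push_neg at hc
      have hgle : f sI / sI ≤ f sNB / sNB := by
        rcases eq_or_lt_of_le hc with h | h
        · rw [h]
        · exact le_of_lt (gdec sNB hNBmem sI hImem h)
      have hhle : -deriv f sNB ≤ -deriv f sI := by
        rcases eq_or_lt_of_le hc with h | h
        · rw [h]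
        · exact le_of_lt (hmono sNB hNBmem sI hImem h)
      have hsq : (f sI / sI)^2 ≤ (f sNB / sNB)^2 :=
        pow_le_pow_left₀ (le_of_lt gIpos) hgle 2
      have h2 : (f sNB / sNB)^2 < f sNB / sNB := by nlinarith
      linarith [hNB, hI]
    have hEI : sE < sI := by
      by_contra hc
      push_neg at hc
      have hgge : 1 ≤ f sI / sI := by
        rcases eq_or_lt_of_le hc with h | h
        · rw [h, hE, div_self hEne]
        · have := gdec sI hImem sE hEmem h
          rw [hE, div_self hEne] at this
          exact le_of_lt this
      have hhE : -deriv f sE < -deriv f sNB := hmono sE hEmem sNB hNBmem hgt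
      have hhIE : -deriv f sI ≤ -deriv f sE := by
        rcases eq_or_lt_of_le hc with h | h
        · rw [h]
        · exact le_of_lt (hmono sI hImem sE hEmem h)
      have hsq : 1 ≤ (f sI / sI)^2 := by nlinarith
      linarith [hI, hNB]
    have ratio : -deriv f sI * sI / f sI < 1 := by
      rw [ratio_eq]
      have := gdec sE hEmem sI hImem hEI
      rwa [hE, div_self hEne] at this
    exact ⟨hIlt, hEI, ratio, hNBlt1⟩
  · intro hlt
    have g1 : 1 < f sNB / sNB := by
      have := gdec sNB hNBmem sE hEmem hlt
      rwa [hE, div_self hEne] at this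
    have hNBgt1 : 1 < -deriv f sNB := by rw [hNB]; exact g1
    have hIgt : sNB < sI := by
      by_contra hc
      push_neg at hc
      have hgge : f sNB / sNB ≤ f sI / sI := by
        rcases eq_or_lt_of_le hc with h | h
        · rw [h]
        · exact le_of_lt (gdec sI hImem sNB hNBmem h)
      have hhle : -deriv f sI ≤ -deriv f sNB := by
        rcases eq_or_lt_of_le hc with h | h
        · rw [h]
        · exact le_of_lt (hmono sI hImem sNB hNBmem h)
      have hgI1 : 1 < f sI / sI := lt_of_lt_of_le g1 hgge
      have hsq : f sI / sI < (f sI / sI)^2 := by nlinarith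
      linarith [hI, hNB]
    have hIE : sI < sE := by
      by_contra hc
      push_neg at hc
      have hgle : f sI / sI ≤ 1 := by
        rcases eq_or_lt_of_le hc with h | h
        · rw [← h, hE, div_self hEne]
        · have := gdec sE hEmem sI hImem h
          rw [hE, div_self hEne] at this
          exact le_of_lt this
      have hhE : -deriv f sNB < -deriv f sE := hmono sNB hNBmem sE hEmem hlt
      have hhIE : -deriv f sE ≤ -deriv f sI := by
        rcases eq_or_lt_of_le hc with h | h
        · rw [h]
        · exact le_of_lt (hmono sE hEmem sI hImem h)
      have hsq : (f sI / sI)^2 ≤ 1 := by nlinarith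
      linarith [hI, hNB]
    have ratio : -deriv f sI * sI / f sI > 1 := by
      rw [ratio_eq]
      have := gdec sI hImem sE hEmem hIE
      rwa [hE, div_self hEne] at this
    exact ⟨hIgt, hIE, ratio, hNBgt1⟩
end

section
/- (Monotonicity lemma for concave decreasing frontiers, Lemma D.1.) Let b > 0 and let f : [0, b] → ℝ be continuous on [0, b] and twice differentiable on (0, b), with f(x) > 0, f′(x) < 0, and f″(x) < 0 for all x ∈ (0, b). Then, on (0, b): (i) x ↦ f′(x)/f(x) is strictly decreasing; (ii) x ↦ x·f′(x) − f(x) is strictly decreasing; (iii) x ↦ f′(x) + f(x)/x is strictly decreasing; (iv) x ↦ f′(x) + (f(x)/x)² is strictly decreasing; (v) for every fixed y ∈ [0, b] with y > 0, x ↦ (f(y) − f(x))·(y/x) is strictly increasing; (vi) for every fixed y ∈ (0, b), x ↦ (y − x)·f(y)/f(x) is strictly decreasing. -/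
open Set

/-- **Monotonicity lemma for concave decreasing frontiers (Lemma D.1).** -/
theorem monotonicity_concave_decreasing_frontier
    (b : ℝ) (hb : 0 < b) (f : ℝ → ℝ)
    (hcont : ContinuousOn f (Set.Icc 0 b))
    (hdiff : ∀ x ∈ Set.Ioo (0 : ℝ) b, DifferentiableAt ℝ f x)
    (hdiff2 : ∀ x ∈ Set.Ioo (0 : ℝ) b, DifferentiableAt ℝ (deriv f) x)
    (hpos : ∀ x ∈ Set.Ioo (0 : ℝ) b, 0 < f x)
    (hder : ∀ x ∈ Set.Ioo (0 : ℝ) b, deriv f x < 0)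
    (hconc : ∀ x ∈ Set.Ioo (0 : ℝ) b, deriv (deriv f) x < 0) :
    StrictAntiOn (fun x => deriv f x / f x) (Set.Ioo 0 b) ∧
    StrictAntiOn (fun x => x * deriv f x - f x) (Set.Ioo 0 b) ∧
    StrictAntiOn (fun x => deriv f x + f x / x) (Set.Ioo 0 b) ∧
    StrictAntiOn (fun x => deriv f x + (f x / x) ^ 2) (Set.Ioo 0 b) ∧
    (∀ y ∈ Set.Icc (0 : ℝ) b, 0 < y →
      StrictMonoOn (fun x => (f y - f x) * (y / x)) (Set.Ioo 0 b)) ∧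
    (∀ y ∈ Set.Ioo (0 : ℝ) b,
      StrictAntiOn (fun x => (y - x) * f y / f x) (Set.Ioo 0 b)) := by
  have hconv : Convex ℝ (Set.Ioo (0:ℝ) b) := convex_Ioo 0 b
  have hint : interior (Set.Ioo (0:ℝ) b) = Set.Ioo 0 b := isOpen_Ioo.interior_eq
  have hD : ∀ x ∈ Set.Ioo (0:ℝ) b, HasDerivAt f (deriv f x) x :=
    fun x hx => (hdiff x hx).hasDerivAt
  have hD' : ∀ x ∈ Set.Ioo (0:ℝ) b, HasDerivAt (deriv f) (deriv (deriv f) x) x :=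
    fun x hx => (hdiff2 x hx).hasDerivAt
  have hfne : ∀ x ∈ Set.Ioo (0:ℝ) b, f x ≠ 0 := fun x hx => ne_of_gt (hpos x hx)
  -- f' strictly decreasing on Ioo
  have hf'anti : StrictAntiOn (deriv f) (Set.Ioo 0 b) := by
    apply strictAntiOn_of_deriv_neg hconv
    · exact fun x hx => ((hdiff2 x hx).continuousAt).continuousWithinAt
    · rw [hint]; exact hconc
  -- tangent line inequality
  have tangent : ∀ x ∈ Set.Ioo (0:ℝ) b, ∀ y ∈ Set.Icc (0:ℝ) b,
      deriv f x * (x - y) ≤ f x - f y := by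
    intro x hx y hy
    rcases lt_trichotomy y x with h | h | h
    · obtain ⟨c, hc, hceq⟩ := exists_deriv_eq_slope f h
        (hcont.mono (Icc_subset_Icc hy.1 hx.2.le))
        (fun z hz => (hdiff z ⟨lt_of_le_of_lt hy.1 hz.1, hz.2.trans hx.2⟩).differentiableWithinAt)
      have hcmem : c ∈ Set.Ioo (0:ℝ) b := ⟨lt_of_le_of_lt hy.1 hc.1, hc.2.trans hx.2⟩
      have h1 : deriv f x < deriv f c := hf'anti hcmem hx hc.2
      have h2 : deriv f c * (x - y) = f x - f y := by
        rw [hceq, div_mul_cancel₀ _ (sub_ne_zero.mpr h.ne')]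
      nlinarith [sub_pos.mpr h]
    · subst h; simp
    · obtain ⟨c, hc, hceq⟩ := exists_deriv_eq_slope f h
        (hcont.mono (Icc_subset_Icc hx.1.le hy.2))
        (fun z hz => (hdiff z ⟨hx.1.trans hz.1, lt_of_lt_of_le hz.2 hy.2⟩).differentiableWithinAt)
      have hcmem : c ∈ Set.Ioo (0:ℝ) b := ⟨hx.1.trans hc.1, lt_of_lt_of_le hc.2 hy.2⟩
      have h1 : deriv f c < deriv f x := hf'anti hx hcmem hc.1
      have h2 : deriv f c * (y - x) = f y - f x := by
        rw [hceq, div_mul_cancel₀ _ (sub_ne_zero.mpr h.ne')]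
      nlinarith [sub_pos.mpr h]
  refine ⟨?_, ?_, ?_, ?_, ?_, ?_⟩
  -- (i) f'/f
  · apply strictAntiOn_of_deriv_neg hconv
    · intro x hx
      exact (((hD' x hx).div (hD x hx) (hfne x hx)).differentiableAt.continuousAt).continuousWithinAt
    · rw [hint]
      intro x hx
      have H := (hD' x hx).div (hD x hx) (hfne x hx)
      simp only [id_eq, Pi.add_def, Pi.sub_def, Pi.mul_def, Pi.div_def, Pi.pow_def, Pi.sub_apply, Pi.div_apply] at H
      rw [H.deriv]
      apply div_neg_of_neg_of_pos
      · nlinarith [hpos x hx, hder x hx, hconc x hx]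
      · exact pow_pos (hpos x hx) 2
  -- (ii) x f' - f
  · apply strictAntiOn_of_deriv_neg hconv
    · intro x hx
      exact ((((hasDerivAt_id x).mul (hD' x hx)).sub (hD x hx)).differentiableAt.continuousAt).continuousWithinAt
    · rw [hint]
      intro x hx
      have H := ((hasDerivAt_id x).mul (hD' x hx)).sub (hD x hx)
      simp only [id_eq, Pi.add_def, Pi.sub_def, Pi.mul_def, Pi.div_def, Pi.pow_def, Pi.sub_apply, Pi.div_apply] at H
      rw [H.deriv]
      have := hconc x hx
      have := hx.1
      nlinarith
  -- (iii) f' + f/x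
  · apply strictAntiOn_of_deriv_neg hconv
    · intro x hx
      exact (((hD' x hx).add ((hD x hx).div (hasDerivAt_id x) (ne_of_gt hx.1))).differentiableAt.continuousAt).continuousWithinAt
    · rw [hint]
      intro x hx
      have H := (hD' x hx).add ((hD x hx).div (hasDerivAt_id x) (ne_of_gt hx.1))
      simp only [id_eq, Pi.add_def, Pi.sub_def, Pi.mul_def, Pi.div_def, Pi.pow_def, Pi.sub_apply, Pi.div_apply] at H
      rw [H.deriv]
      have h1 : deriv f x * x - f x * 1 < 0 := by
        nlinarith [hpos x hx, hder x hx, hx.1]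
      have h2 : (deriv f x * x - f x * 1) / x ^ 2 < 0 :=
        div_neg_of_neg_of_pos h1 (pow_pos hx.1 2)
      have := hconc x hx
      linarith
  -- (iv) f' + (f/x)^2
  · apply strictAntiOn_of_deriv_neg hconv
    · intro x hx
      exact (((hD' x hx).add (((hD x hx).div (hasDerivAt_id x) (ne_of_gt hx.1)).pow 2)).differentiableAt.continuousAt).continuousWithinAt
    · rw [hint]
      intro x hx
      have H := (hD' x hx).add (((hD x hx).div (hasDerivAt_id x) (ne_of_gt hx.1)).pow 2)
      simp only [id_eq, Pi.add_def, Pi.sub_def, Pi.mul_def, Pi.div_def, Pi.pow_def, Pi.sub_apply, Pi.div_apply] at H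
      rw [H.deriv]
      have h1 : deriv f x * x - f x * 1 < 0 := by
        nlinarith [hpos x hx, hder x hx, hx.1]
      have h2 : (deriv f x * x - f x * 1) / x ^ 2 < 0 :=
        div_neg_of_neg_of_pos h1 (pow_pos hx.1 2)
      have h3 : (0:ℝ) < f x / x := div_pos (hpos x hx) hx.1
      have h4 : (2:ℝ) * (f x / x) ^ (2 - 1) * ((deriv f x * x - f x * 1) / x ^ 2) < 0 := by
        apply mul_neg_of_pos_of_neg
        · simpa using by positivity
        · exact h2
      have := hconc x hx
      linarith
  -- (v)
  · intro y hy hypos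
    apply strictMonoOn_of_deriv_pos hconv
    · intro x hx
      exact ((((hasDerivAt_const x (f y)).sub (hD x hx)).mul
        ((hasDerivAt_const x y).div (hasDerivAt_id x) (ne_of_gt hx.1))).differentiableAt.continuousAt).continuousWithinAt
    · rw [hint]
      intro x hx
      have H := ((hasDerivAt_const x (f y)).sub (hD x hx)).mul
        ((hasDerivAt_const x y).div (hasDerivAt_id x) (ne_of_gt hx.1))
      simp only [id_eq, Pi.add_def, Pi.sub_def, Pi.mul_def, Pi.div_def, Pi.pow_def, Pi.sub_apply, Pi.div_apply] at H
      rw [H.deriv]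
      have key : 0 < f x - f y - x * deriv f x := by
        have := tangent x hx y hy
        nlinarith [hder x hx]
      have hxne : x ≠ 0 := ne_of_gt hx.1
      have e : (0 - deriv f x) * (y / x) + (f y - f x) * ((0 * x - y * 1) / x ^ 2)
          = y / x ^ 2 * (f x - f y - x * deriv f x) := by
        field_simp
        ring
      rw [e]
      exact mul_pos (div_pos hypos (pow_pos hx.1 2)) key
  -- (vi)
  · intro y hy
    apply strictAntiOn_of_deriv_neg hconv
    · intro x hx
      exact (((((hasDerivAt_const x y).sub (hasDerivAt_id x)).mul_const (f y)).div
        (hD x hx) (hfne x hx)).differentiableAt.continuousAt).continuousWithinAt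
    · rw [hint]
      intro x hx
      have H := (((hasDerivAt_const x y).sub (hasDerivAt_id x)).mul_const (f y)).div
        (hD x hx) (hfne x hx)
      simp only [id_eq, Pi.add_def, Pi.sub_def, Pi.mul_def, Pi.div_def, Pi.pow_def, Pi.sub_apply, Pi.div_apply] at H
      rw [H.deriv]
      apply div_neg_of_neg_of_pos
      · have ht := tangent x hx y ⟨hy.1.le, hy.2.le⟩
        have hfy : 0 < f y := hpos y hy
        nlinarith [hpos x hx]
      · exact pow_pos (hpos x hx) 2
end
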